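/- arXiv:2006.13795 — 3 statements merged into one kernel-verified Lean document; each statement's English description precedes it below -/
import Mathlib

section
/- If f is a piecewise monotone continuous interval map with constant slope s (i.e., affine with slope ±s on each monotonicity piece) with s ≥ 1, then the topological entropy of f equals log s. -/
/-!
Lower bound: if `F` maps `[0,1]` into itself and has slope `±σ` on finitely many pieces, then on a
lap `[u,v]` of `F` the slopes cannot change sign, so `σ (v - u) = |F v - F u| ≤ 1`; hence `F` has
at least `σ` laps, and `f^[n]` has at least `s ^ n`.

Upper bound: the breakpoints of `g ∘ F` are those of `F` together with the `F`-preimages of the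
breakpoints of `g`. A piece of this refinement with neither end a breakpoint of `F` is mapped
affinely onto a segment joining two distinct breakpoints of `g`, so it has length at least `ℓ / σ`,
where `ℓ` is the minimal gap between breakpoints of `g`. Taking `g = f^[m]` this bounds the number
of pieces of `f^[n + m]` by `3 N + s ^ n / ℓ` in terms of the number `N` of pieces of `f^[n]`, hence
that of `f^[n]` by `D (s ^ m + 4) ^ (n / m)`, and `log (s ^ m + 4) / m ≤ log 5 / m + log s`.
-/

open Set Filter

/-- `k` intervals of monotonicity partitioning `[a,b]`. -/
def IsLapPartition (f : ℝ → ℝ) (a b : ℝ) (k : ℕ) : Prop :=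
  ∃ t : ℕ → ℝ, t 0 = a ∧ t k = b ∧ (∀ i < k, t i < t (i + 1)) ∧
    ∀ i < k, MonotoneOn f (Set.Icc (t i) (t (i + 1))) ∨
      AntitoneOn f (Set.Icc (t i) (t (i + 1)))

/-- The lap number: the minimal number of intervals of monotonicity of `f` on `[a,b]`. -/
noncomputable def lapNumber (f : ℝ → ℝ) (a b : ℝ) : ℕ :=
  sInf {k | 0 < k ∧ IsLapPartition f a b k}

theorem mem_Icc_of_lt_succ {t : ℕ → ℝ} {k : ℕ} (h : ∀ i < k, t i < t (i + 1)) {i : ℕ}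
    (hi : i ≤ k) : t i ∈ Icc (t 0) (t k) := by
  have hmono := (strictMonoOn_Iic_of_lt_succ (ψ := t) fun m hm => by simpa using h m hm).monotoneOn
  exact ⟨hmono (by simp) (by simpa using hi) i.zero_le, hmono (by simpa using hi) (by simp) hi⟩

theorem Finset.exists_pos_le_abs_sub (T : Finset ℝ) :
    ∃ ℓ > 0, ∀ y ∈ T, ∀ y' ∈ T, y ≠ y' → ℓ ≤ |y - y'| := by
  classical
  set D := insert 1 (T.offDiag.image fun p => |p.1 - p.2|)
  refine ⟨D.min' (Finset.insert_nonempty _ _), (Finset.lt_min'_iff _ _).2 fun z hz => ?_,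
    fun y hy y' hy' hne => D.min'_le _ (Finset.mem_insert_of_mem
      (Finset.mem_image.2 ⟨(y, y'), Finset.mem_offDiag.2 ⟨hy, hy', hne⟩, rfl⟩))⟩
  obtain rfl | hz := Finset.mem_insert.1 hz
  · exact one_pos
  · obtain ⟨⟨y, y'⟩, hyy', rfl⟩ := Finset.mem_image.1 hz
    exact abs_pos.2 (sub_ne_zero.2 (Finset.mem_offDiag.1 hyy').2.2)

theorem card_mul_le_sub {t : ℕ → ℝ} {r : ℕ} (ht : ∀ i < r, t i ≤ t (i + 1)) {J : Finset ℕ}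
    (hJ : J ⊆ Finset.range r) {δ : ℝ} (hδ : ∀ j ∈ J, δ ≤ t (j + 1) - t j) :
    J.card * δ ≤ t r - t 0 :=
  calc J.card * δ = ∑ _j ∈ J, δ := by rw [Finset.sum_const, nsmul_eq_mul]
    _ ≤ ∑ j ∈ J, (t (j + 1) - t j) := Finset.sum_le_sum hδ
    _ ≤ ∑ j ∈ Finset.range r, (t (j + 1) - t j) :=
        Finset.sum_le_sum_of_subset_of_nonneg hJ fun i hi _ =>
          sub_nonneg.2 (ht i (Finset.mem_range.1 hi))
    _ = t r - t 0 := Finset.sum_range_sub t r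


def HasSlopeOn (F : ℝ → ℝ) (σ x y : ℝ) : Prop :=
  ∃ a d : ℝ, |a| = σ ∧ ∀ z ∈ Icc x y, F z = a * z + d

namespace HasSlopeOn

variable {F G : ℝ → ℝ} {σ τ x y x' y' : ℝ}

theorem mono (h : HasSlopeOn F σ x y) (hx : x ≤ x') (hy : y' ≤ y) : HasSlopeOn F σ x' y' := by
  obtain ⟨a, d, ha, hF⟩ := h
  exact ⟨a, d, ha, fun z hz => hF z ⟨hx.trans hz.1, hz.2.trans hy⟩⟩

theorem comp (hG : HasSlopeOn G τ x' y') (hF : HasSlopeOn F σ x y)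
    (hmaps : MapsTo F (Icc x y) (Icc x' y')) : HasSlopeOn (G ∘ F) (τ * σ) x y := by
  obtain ⟨a, d, ha, hF⟩ := hF
  obtain ⟨b, e, hb, hG⟩ := hG
  refine ⟨b * a, b * d + e, by rw [abs_mul, ha, hb], fun z hz => ?_⟩
  rw [Function.comp_apply, hG _ (hmaps hz), hF z hz]
  ring

theorem abs_sub (h : HasSlopeOn F σ x y) (hxy : x ≤ y) : |F y - F x| = σ * (y - x) := by
  obtain ⟨a, d, ha, hF⟩ := h
  rw [hF y ⟨hxy, le_rfl⟩, hF x ⟨le_rfl, hxy⟩, show a * y + d - (a * x + d) = a * (y - x) by ring,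
    abs_mul, ha, abs_of_nonneg (sub_nonneg.2 hxy)]

theorem continuousOn (h : HasSlopeOn F σ x y) : ContinuousOn F (Icc x y) := by
  obtain ⟨a, d, -, hF⟩ := h
  exact ((continuous_const.mul continuous_id).add continuous_const).continuousOn.congr hF

theorem monotoneOn_or_antitoneOn (h : HasSlopeOn F σ x y) :
    MonotoneOn F (Icc x y) ∨ AntitoneOn F (Icc x y) := by
  obtain ⟨a, d, -, hF⟩ := h
  rcases le_total 0 a with ha | ha
  · exact Or.inl fun z hz w hw hzw => by rw [hF z hz, hF w hw]; nlinarith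
  · exact Or.inr fun z hz w hw hzw => by rw [hF z hz, hF w hw]; nlinarith

theorem mapsTo_uIcc (h : HasSlopeOn F σ x y) : MapsTo F (Icc x y) (uIcc (F x) (F y)) := by
  intro z hz
  have hx : x ∈ Icc x y := ⟨le_rfl, hz.1.trans hz.2⟩
  have hy : y ∈ Icc x y := ⟨hz.1.trans hz.2, le_rfl⟩
  rcases h.monotoneOn_or_antitoneOn with hF | hF
  · exact Icc_subset_uIcc ⟨hF hx hz hz.1, hF hz hy hz.2⟩
  · exact Icc_subset_uIcc' ⟨hF hz hy hz.2, hF hx hz hz.1⟩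

theorem uIoo_subset_image (h : HasSlopeOn F σ x y) (hxy : x ≤ y) :
    uIoo (F x) (F y) ⊆ F '' Ioo x y := by
  rcases le_total (F x) (F y) with hF | hF
  · rw [uIoo_of_le hF]
    exact intermediate_value_Ioo hxy h.continuousOn
  · rw [uIoo_of_ge hF]
    exact intermediate_value_Ioo' hxy h.continuousOn

end HasSlopeOn

structure IsSlopeBreaks (F : ℝ → ℝ) (σ : ℝ) (S : Finset ℝ) : Prop where
  zero_mem : (0 : ℝ) ∈ S
  one_mem : (1 : ℝ) ∈ S
  mem_Icc : ∀ x ∈ S, x ∈ Icc (0 : ℝ) 1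
  hasSlopeOn : ∀ x y, 0 ≤ x → x ≤ y → y ≤ 1 → (∀ z ∈ S, z ∉ Ioo x y) → HasSlopeOn F σ x y

noncomputable def sortedEnum (S : Finset ℝ) (i : ℕ) : ℝ :=
  if h : i < S.card then S.orderEmbOfFin rfl ⟨i, h⟩ else 0

section sortedEnum

variable {S : Finset ℝ}

theorem sortedEnum_mem {i : ℕ} (hi : i < S.card) : sortedEnum S i ∈ S := by
  rw [sortedEnum, dif_pos hi]
  exact S.orderEmbOfFin_mem rfl _

theorem sortedEnum_strictMonoOn : StrictMonoOn (sortedEnum S) (Iio S.card) := by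
  intro i hi j hj hij
  simp only [sortedEnum, dif_pos (show i < S.card from hi), dif_pos (show j < S.card from hj)]
  exact (S.orderEmbOfFin rfl).strictMono (Fin.mk_lt_mk.2 hij)

theorem sortedEnum_lt_succ {i : ℕ} (hi : i + 1 < S.card) :
    sortedEnum S i < sortedEnum S (i + 1) :=
  sortedEnum_strictMonoOn (show i < S.card by omega) hi (Nat.lt_succ_self i)

theorem exists_sortedEnum_eq {x : ℝ} (hx : x ∈ S) : ∃ i < S.card, sortedEnum S i = x := by
  rw [← Finset.mem_coe, ← S.range_orderEmbOfFin rfl] at hx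
  obtain ⟨⟨i, hi⟩, rfl⟩ := hx
  exact ⟨i, hi, by rw [sortedEnum, dif_pos hi]⟩

theorem sortedEnum_notMem_Ioo {i : ℕ} (hi : i + 1 < S.card) {z : ℝ} (hz : z ∈ S) :
    z ∉ Ioo (sortedEnum S i) (sortedEnum S (i + 1)) := by
  rintro ⟨h1, h2⟩
  obtain ⟨j, hj, rfl⟩ := exists_sortedEnum_eq hz
  have := (sortedEnum_strictMonoOn.lt_iff_lt (show i < S.card by omega) hj).1 h1
  have := (sortedEnum_strictMonoOn.lt_iff_lt hj hi).1 h2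
  omega

theorem sortedEnum_zero (h0 : 0 ∈ S) (hS : ∀ x ∈ S, 0 ≤ x) : sortedEnum S 0 = 0 := by
  obtain ⟨j, hj, hj0⟩ := exists_sortedEnum_eq h0
  refine le_antisymm ?_ (hS _ (sortedEnum_mem (j.zero_le.trans_lt hj)))
  exact hj0 ▸ sortedEnum_strictMonoOn.monotoneOn (j.zero_le.trans_lt hj) hj j.zero_le

theorem sortedEnum_card_sub_one (h1 : 1 ∈ S) (hS : ∀ x ∈ S, x ≤ 1) :
    sortedEnum S (S.card - 1) = 1 := by
  obtain ⟨j, hj, hj1⟩ := exists_sortedEnum_eq h1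
  have hlast : S.card - 1 < S.card := by omega
  refine le_antisymm (hS _ (sortedEnum_mem hlast)) ?_
  exact hj1 ▸ sortedEnum_strictMonoOn.monotoneOn hj hlast (by omega)

theorem card_sub_one_le_two_mul_card_add_card_filter (B S : Finset ℝ) :
    B.card - 1 ≤ 2 * S.card + ((Finset.range (B.card - 1)).filter
      fun j => sortedEnum B j ∉ S ∧ sortedEnum B (j + 1) ∉ S).card := by
  classical
  set t := sortedEnum B
  set r := B.card - 1
  set A₁ := (Finset.range r).filter fun j => t j ∈ S
  set A₂ := (Finset.range r).filter fun j => t (j + 1) ∈ S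
  set J := (Finset.range r).filter fun j => t j ∉ S ∧ t (j + 1) ∉ S
  have hinj : InjOn t (Iio B.card) := sortedEnum_strictMonoOn.injOn
  have hA₁ : A₁.card ≤ S.card := Finset.card_le_card_of_injOn t
    (fun j hj => (Finset.mem_filter.1 hj).2)
    (hinj.mono fun j hj => by simp [A₁] at hj; simp; omega)
  have hA₂ : A₂.card ≤ S.card := Finset.card_le_card_of_injOn (fun j => t (j + 1))
    (fun j hj => (Finset.mem_filter.1 hj).2)
    fun i hi j hj h => by
      simp [A₂] at hi hj
      have := hinj (by simp; omega) (by simp; omega) h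
      omega
  have hcover : Finset.range r ⊆ A₁ ∪ A₂ ∪ J := fun j hj => by
    simp only [A₁, A₂, J, Finset.mem_union, Finset.mem_filter]
    tauto
  calc r = (Finset.range r).card := (Finset.card_range r).symm
    _ ≤ (A₁ ∪ A₂ ∪ J).card := Finset.card_le_card hcover
    _ ≤ A₁.card + A₂.card + J.card :=
        (Finset.card_union_le _ _).trans (Nat.add_le_add_right (Finset.card_union_le _ _) _)
    _ ≤ 2 * S.card + J.card := by omega

end sortedEnum

namespace IsSlopeBreaks

variable {F G : ℝ → ℝ} {σ τ : ℝ} {S T : Finset ℝ}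

theorem one_lt_card (hF : IsSlopeBreaks F σ S) : 1 < S.card :=
  Finset.one_lt_card.2 ⟨0, hF.zero_mem, 1, hF.one_mem, zero_ne_one⟩

theorem isLapPartition (hF : IsSlopeBreaks F σ S) : IsLapPartition F 0 1 (S.card - 1) := by
  have hcard := hF.one_lt_card
  refine ⟨sortedEnum S, sortedEnum_zero hF.zero_mem fun x hx => (hF.mem_Icc x hx).1,
    sortedEnum_card_sub_one hF.one_mem fun x hx => (hF.mem_Icc x hx).2,
    fun i hi => sortedEnum_lt_succ (by omega), fun i hi => ?_⟩
  have hi' : i + 1 < S.card := by omega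
  exact (hF.hasSlopeOn _ _ (hF.mem_Icc _ (sortedEnum_mem (by omega))).1
    (sortedEnum_lt_succ hi').le (hF.mem_Icc _ (sortedEnum_mem hi')).2
    fun z hz => sortedEnum_notMem_Ioo hi' hz).monotoneOn_or_antitoneOn

theorem lapNumber_le (hF : IsSlopeBreaks F σ S) : lapNumber F 0 1 ≤ S.card - 1 :=
  Nat.sInf_le ⟨by have := hF.one_lt_card; omega, hF.isLapPartition⟩

theorem isLapPartition_lapNumber (hF : IsSlopeBreaks F σ S) :
    IsLapPartition F 0 1 (lapNumber F 0 1) :=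
  (Nat.sInf_mem ⟨_, by have := hF.one_lt_card; omega, hF.isLapPartition⟩ :
    lapNumber F 0 1 ∈ {k | 0 < k ∧ IsLapPartition F 0 1 k}).2

theorem abs_sub_eq (hF : IsSlopeBreaks F σ S) {u v : ℝ} (hu : 0 ≤ u) (huv : u ≤ v) (hv : v ≤ 1)
    (hmono : MonotoneOn F (Icc u v) ∨ AntitoneOn F (Icc u v)) : |F v - F u| = σ * (v - u) := by
  classical
  suffices key : ∀ P : Finset ℝ, ∀ u v, 0 ≤ u → u ≤ v → v ≤ 1 →
      (MonotoneOn F (Icc u v) ∨ AntitoneOn F (Icc u v)) → (∀ z ∈ S, z ∈ Ioo u v → z ∈ P) →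
      |F v - F u| = σ * (v - u) from key S u v hu huv hv hmono fun z hz _ => hz
  intro P
  induction P using Finset.induction_on with
  | empty =>
    intro u v hu huv hv _ hP
    exact (hF.hasSlopeOn u v hu huv hv fun z hz hzI => by simpa using hP z hz hzI).abs_sub huv
  | insert c P hc ih =>
    intro u v hu huv hv hmono hP
    by_cases hcI : c ∈ Ioo u v
    · have hleft := ih u c hu hcI.1.le (hcI.2.le.trans hv)
        (hmono.imp (·.mono (Icc_subset_Icc_right hcI.2.le))
          (·.mono (Icc_subset_Icc_right hcI.2.le)))
        fun z hz hzI => (Finset.mem_insert.1 (hP z hz ⟨hzI.1, hzI.2.trans hcI.2⟩)).resolve_left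
          hzI.2.ne
      have hright := ih c v (hu.trans hcI.1.le) hcI.2.le hv
        (hmono.imp (·.mono (Icc_subset_Icc_left hcI.1.le))
          (·.mono (Icc_subset_Icc_left hcI.1.le)))
        fun z hz hzI => (Finset.mem_insert.1 (hP z hz ⟨hcI.1.trans hzI.1, hzI.2⟩)).resolve_left
          hzI.1.ne'
      have hc' : c ∈ Icc u v := Ioo_subset_Icc_self hcI
      have hsplit : |F v - F u| = |F v - F c| + |F c - F u| := by
        rw [show F v - F u = (F v - F c) + (F c - F u) by ring, abs_add_eq_add_abs_iff]
        rcases hmono with h | h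
        · exact Or.inl ⟨sub_nonneg.2 (h hc' (right_mem_Icc.2 huv) hcI.2.le),
            sub_nonneg.2 (h (left_mem_Icc.2 huv) hc' hcI.1.le)⟩
        · exact Or.inr ⟨sub_nonpos.2 (h hc' (right_mem_Icc.2 huv) hcI.2.le),
            sub_nonpos.2 (h (left_mem_Icc.2 huv) hc' hcI.1.le)⟩
      rw [hsplit, hleft, hright]
      ring
    · exact ih u v hu huv hv hmono fun z hz hzI =>
        (Finset.mem_insert.1 (hP z hz hzI)).resolve_left fun h => hcI (h ▸ hzI)

theorem le_lapNumber (hF : IsSlopeBreaks F σ S) (hmaps : MapsTo F (Icc 0 1) (Icc 0 1)) :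
    σ ≤ lapNumber F 0 1 := by
  obtain ⟨t, h0, h1, hlt, hmono⟩ := hF.isLapPartition_lapNumber
  set K := lapNumber F 0 1
  have ht : ∀ i ≤ K, t i ∈ Icc (0 : ℝ) 1 := fun i hi => h0 ▸ h1 ▸ mem_Icc_of_lt_succ hlt hi
  calc σ = ∑ i ∈ Finset.range K, σ * (t (i + 1) - t i) := by
        rw [← Finset.mul_sum, Finset.sum_range_sub, h0, h1]; ring
    _ = ∑ i ∈ Finset.range K, |F (t (i + 1)) - F (t i)| :=
        Finset.sum_congr rfl fun i hi => by
          have hi := Finset.mem_range.1 hi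
          exact (hF.abs_sub_eq (ht i hi.le).1 (hlt i hi).le (ht (i + 1) hi).2 (hmono i hi)).symm
    _ ≤ ∑ _i ∈ Finset.range K, (1 : ℝ) :=
        Finset.sum_le_sum fun i hi => by
          have hi := Finset.mem_range.1 hi
          have h := hmaps (ht i hi.le)
          have h' := hmaps (ht (i + 1) hi)
          rw [abs_sub_le_iff]
          constructor <;> linarith [h.1, h.2, h'.1, h'.2]
    _ = K := by simp

theorem le_mul_sub (hF : IsSlopeBreaks F σ S) (hσ : 0 < σ) {ℓ : ℝ}
    (hT : ∀ y ∈ T, ∀ y' ∈ T, y ≠ y' → ℓ ≤ |y - y'|) {x y : ℝ} (hx : 0 ≤ x) (hxy : x < y)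
    (hy : y ≤ 1) (hgap : ∀ z ∈ S, z ∉ Ioo x y) (hFx : F x ∈ T) (hFy : F y ∈ T) :
    ℓ ≤ σ * (y - x) := by
  have habs := (hF.hasSlopeOn x y hx hxy.le hy hgap).abs_sub hxy.le
  refine habs ▸ hT _ hFy _ hFx fun h => ?_
  rw [h, sub_self, abs_zero] at habs
  exact (mul_pos hσ (sub_pos.2 hxy)).ne habs

theorem finite_preimage (hF : IsSlopeBreaks F σ S) (hσ : 0 < σ) (T : Finset ℝ) :
    {x ∈ Icc (0 : ℝ) 1 | F x ∈ T}.Finite := by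
  classical
  set A := {x ∈ Icc (0 : ℝ) 1 | F x ∈ T}
  set g : ℝ → Finset ℝ × ℝ := fun x => (S.filter (· ≤ x), F x)
  -- two points of `A` with the same breaks to their left lie in one affine piece
  have hne : ∀ x ∈ A, ∀ y ∈ A, x < y → g x ≠ g y := by
    rintro x ⟨hx, -⟩ y ⟨hy, -⟩ hxy hg
    simp only [g, Prod.mk.injEq] at hg
    have hgap : ∀ z ∈ S, z ∉ Ioo x y := fun z hz hzI => by
      have : z ∈ S.filter (· ≤ x) := hg.1 ▸ Finset.mem_filter.2 ⟨hz, hzI.2.le⟩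
      exact (Finset.mem_filter.1 this).2.not_gt hzI.1
    have habs := (hF.hasSlopeOn x y hx.1 hxy.le hy.2 hgap).abs_sub hxy.le
    rw [hg.2, sub_self, abs_zero] at habs
    exact (mul_pos hσ (sub_pos.2 hxy)).ne habs
  refine Set.Finite.of_finite_image (f := g) ?_ fun x hx y hy hg => ?_
  · refine (S.powerset.finite_toSet.prod T.finite_toSet).subset ?_
    rintro _ ⟨x, ⟨-, hxT⟩, rfl⟩
    exact ⟨Finset.mem_powerset.2 (Finset.filter_subset _ _), hxT⟩
  · rcases lt_trichotomy x y with h | h | h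
    · exact absurd hg (hne x hx y hy h)
    · exact h
    · exact absurd hg.symm (hne y hy x hx h)

theorem comp (hF : IsSlopeBreaks F σ S) (hG : IsSlopeBreaks G τ T)
    (hmaps : MapsTo F (Icc 0 1) (Icc 0 1)) {P : Finset ℝ}
    (hP : ∀ x, x ∈ P ↔ x ∈ Icc (0 : ℝ) 1 ∧ F x ∈ T) :
    IsSlopeBreaks (G ∘ F) (τ * σ) (S ∪ P) where
  zero_mem := Finset.mem_union_left _ hF.zero_mem
  one_mem := Finset.mem_union_left _ hF.one_mem
  mem_Icc x hx := (Finset.mem_union.1 hx).elim (hF.mem_Icc x) fun h => ((hP x).1 h).1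
  hasSlopeOn x y hx hxy hy hgap := by
    have hFxy := hF.hasSlopeOn x y hx hxy hy fun z hz => hgap z (Finset.mem_union_left _ hz)
    have hFx := hmaps ⟨hx, hxy.trans hy⟩
    have hFy := hmaps ⟨hx.trans hxy, hy⟩
    refine (hG.hasSlopeOn _ _ (le_inf hFx.1 hFy.1) inf_le_sup (sup_le hFx.2 hFy.2) ?_).comp
      hFxy hFxy.mapsTo_uIcc
    rintro w hw hwI
    obtain ⟨z, hz, rfl⟩ := hFxy.uIoo_subset_image hxy hwI
    exact hgap z (Finset.mem_union_right _ ((hP z).2 ⟨⟨hx.trans hz.1.le, hz.2.le.trans hy⟩, hw⟩)) hz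

theorem card_union_le (hF : IsSlopeBreaks F σ S) (hσ : 0 < σ) {P : Finset ℝ}
    (hP : ∀ x, x ∈ P ↔ x ∈ Icc (0 : ℝ) 1 ∧ F x ∈ T) {ℓ : ℝ} (hℓ : 0 < ℓ)
    (hT : ∀ y ∈ T, ∀ y' ∈ T, y ≠ y' → ℓ ≤ |y - y'|) :
    ((S ∪ P).card : ℝ) ≤ 3 * S.card + σ / ℓ := by
  classical
  set B := S ∪ P
  set t := sortedEnum B
  set r := B.card - 1
  set J := (Finset.range r).filter fun j => t j ∉ S ∧ t (j + 1) ∉ S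
  have hBI : ∀ x ∈ B, x ∈ Icc (0 : ℝ) 1 := fun x hx =>
    (Finset.mem_union.1 hx).elim (hF.mem_Icc x) fun h => ((hP x).1 h).1
  have hcard : 1 < B.card :=
    Finset.one_lt_card.2 ⟨0, Finset.mem_union_left _ hF.zero_mem, 1,
      Finset.mem_union_left _ hF.one_mem, zero_ne_one⟩
  have ht0 : t 0 = 0 :=
    sortedEnum_zero (Finset.mem_union_left _ hF.zero_mem) fun x hx => (hBI x hx).1
  have htr : t r = 1 :=
    sortedEnum_card_sub_one (Finset.mem_union_left _ hF.one_mem) fun x hx => (hBI x hx).2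
  have hsucc : ∀ i < r, i + 1 < B.card := fun i hi => by omega
  have hJ : J.card * (ℓ / σ) ≤ 1 := by
    suffices J.card * (ℓ / σ) ≤ t r - t 0 by rwa [htr, ht0, sub_zero] at this
    refine card_mul_le_sub (r := r) (fun i hi => (sortedEnum_lt_succ (hsucc i hi)).le)
      (Finset.filter_subset _ _) fun j hj => ?_
    obtain ⟨hj, hjS, hj1S⟩ := Finset.mem_filter.1 hj
    have hjr := hsucc j (Finset.mem_range.1 hj)
    have hPj : t j ∈ P :=
      (Finset.mem_union.1 (sortedEnum_mem (S := B) (by omega))).resolve_left hjS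
    have hPj1 : t (j + 1) ∈ P := (Finset.mem_union.1 (sortedEnum_mem hjr)).resolve_left hj1S
    rw [div_le_iff₀' hσ]
    exact hF.le_mul_sub hσ hT ((hP _).1 hPj).1.1 (sortedEnum_lt_succ hjr) ((hP _).1 hPj1).1.2
      (fun z hz => sortedEnum_notMem_Ioo hjr (Finset.mem_union_left _ hz)) ((hP _).1 hPj).2
      ((hP _).1 hPj1).2
  have hpieces : (r : ℝ) ≤ 2 * S.card + J.card := by
    exact_mod_cast card_sub_one_le_two_mul_card_add_card_filter B S
  have hJ' : (J.card : ℝ) ≤ σ / ℓ := by rwa [le_div_iff₀ hℓ, ← div_le_one hσ, mul_div_assoc]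
  have hB : (B.card : ℝ) = r + 1 := by rw [← Nat.cast_add_one]; congr; omega
  have hS1 : (1 : ℝ) ≤ S.card := by exact_mod_cast hF.one_lt_card.le
  linarith

theorem exists_comp (hF : IsSlopeBreaks F σ S) (hG : IsSlopeBreaks G τ T) (hσ : 0 < σ)
    (hmaps : MapsTo F (Icc 0 1) (Icc 0 1)) {ℓ : ℝ} (hℓ : 0 < ℓ)
    (hT : ∀ y ∈ T, ∀ y' ∈ T, y ≠ y' → ℓ ≤ |y - y'|) :
    ∃ B, IsSlopeBreaks (G ∘ F) (τ * σ) B ∧ (B.card : ℝ) ≤ 3 * S.card + σ / ℓ :=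
  have hP := fun x => (hF.finite_preimage hσ T).mem_toFinset (a := x)
  ⟨_, hF.comp hG hmaps hP, hF.card_union_le hσ hP hℓ hT⟩

end IsSlopeBreaks

theorem isSlopeBreaks_of_partition {F : ℝ → ℝ} {σ : ℝ} {t : ℕ → ℝ} {k : ℕ} (hk : 0 < k)
    (h0 : t 0 = 0) (h1 : t k = 1) (hlt : ∀ i < k, t i < t (i + 1))
    (hF : ∀ i < k, HasSlopeOn F σ (t i) (t (i + 1))) :
    IsSlopeBreaks F σ ((Finset.range (k + 1)).image t) where
  zero_mem := Finset.mem_image.2 ⟨0, by simp, h0⟩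
  one_mem := Finset.mem_image.2 ⟨k, by simp, h1⟩
  mem_Icc x hx := by
    obtain ⟨i, hi, rfl⟩ := Finset.mem_image.1 hx
    exact h0 ▸ h1 ▸ mem_Icc_of_lt_succ hlt (Nat.lt_succ_iff.1 (Finset.mem_range.1 hi))
  hasSlopeOn x y hx hxy hy hgap := by
    set i := Nat.findGreatest (fun i => t i ≤ x) (k - 1)
    have hix : t i ≤ x := Nat.findGreatest_spec (P := fun i => t i ≤ x) (Nat.zero_le _) (h0 ▸ hx)
    have hik : i < k := (Nat.findGreatest_le _).trans_lt (by omega)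
    refine (hF i hik).mono hix (not_lt.1 fun hyi => ?_)
    rcases (show i + 1 = k ∨ i + 1 ≤ k - 1 by omega) with h | h
    · rw [h, h1] at hyi
      linarith
    · exact hgap _ (Finset.mem_image_of_mem _ (by simp; omega))
        ⟨not_le.1 (Nat.findGreatest_is_greatest (Nat.lt_succ_self i) h), hyi⟩

theorem isSlopeBreaks_id : IsSlopeBreaks id 1 {0, 1} where
  zero_mem := by simp
  one_mem := by simp
  mem_Icc x hx := by
    rcases Finset.mem_insert.1 hx with rfl | hx
    · simp
    · simp [Finset.mem_singleton.1 hx]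
  hasSlopeOn _ _ _ _ _ _ := ⟨1, 0, abs_one, fun z _ => by simp⟩

section Iterate

variable {f : ℝ → ℝ} {s : ℝ} {S₁ : Finset ℝ}

theorem exists_isSlopeBreaks_iterate (hs : 0 < s) (hmaps : MapsTo f (Icc 0 1) (Icc 0 1))
    (hf : IsSlopeBreaks f s S₁) (n : ℕ) : ∃ S, IsSlopeBreaks (f^[n]) (s ^ n) S := by
  induction n with
  | zero => exact ⟨{0, 1}, by simpa using isSlopeBreaks_id⟩
  | succ n ih =>
    obtain ⟨S, hS⟩ := ih
    rw [Function.iterate_succ, pow_succ]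
    exact ⟨_, hf.comp hS hmaps fun x => (hf.finite_preimage hs S).mem_toFinset⟩

theorem exists_card_le_iterate (hs : 0 < s) (hmaps : MapsTo f (Icc 0 1) (Icc 0 1)) {m : ℕ}
    {T : Finset ℝ} (hT : IsSlopeBreaks (f^[m]) (s ^ m) T) {ℓ : ℝ} (hℓ : 0 < ℓ)
    (hsep : ∀ y ∈ T, ∀ y' ∈ T, y ≠ y' → ℓ ≤ |y - y'|) {b : ℕ} {S₀ : Finset ℝ}
    (hS₀ : IsSlopeBreaks (f^[b]) (s ^ b) S₀) (a : ℕ) :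
    ∃ S, IsSlopeBreaks (f^[a * m + b]) (s ^ (a * m + b)) S ∧
      (S.card : ℝ) ≤ (S₀.card + s ^ b / ℓ) * (s ^ m + 4) ^ a := by
  set D := (S₀.card : ℝ) + s ^ b / ℓ
  set R := s ^ m + 4
  have hsR : s ^ m ≤ R := by linarith
  induction a with
  | zero => exact ⟨S₀, by simpa using hS₀, by simp [D]; positivity⟩
  | succ a ih =>
    obtain ⟨S, hS, hcard⟩ := ih
    obtain ⟨B, hB, hBcard⟩ := hS.exists_comp hT (pow_pos hs _) (hmaps.iterate _) hℓ hsep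
    refine ⟨B, by rwa [show (a + 1) * m + b = m + (a * m + b) by ring, Function.iterate_add,
      pow_add], ?_⟩
    have hX : 0 ≤ D * R ^ a := by positivity
    have hpow : s ^ (a * m + b) / ℓ ≤ D * R ^ a := calc
      s ^ (a * m + b) / ℓ = (s ^ m) ^ a * (s ^ b / ℓ) := by rw [pow_add, pow_mul']; ring
      _ ≤ R ^ a * D := mul_le_mul (pow_le_pow_left₀ (by positivity) hsR a) (by simp [D])
          (by positivity) (by positivity)
      _ = D * R ^ a := mul_comm _ _
    calc (B.card : ℝ) ≤ 3 * S.card + s ^ (a * m + b) / ℓ := hBcard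
      _ ≤ 4 * (D * R ^ a) := by linarith
      _ ≤ R * (D * R ^ a) := mul_le_mul_of_nonneg_right (by linarith [pow_pos hs m]) hX
      _ = D * R ^ (a + 1) := by ring

theorem exists_lapNumber_le (hs : 0 < s) (hmaps : MapsTo f (Icc 0 1) (Icc 0 1))
    (hf : IsSlopeBreaks f s S₁) {m : ℕ} (hm : 0 < m) :
    ∃ D, ∀ n, (lapNumber (f^[n]) 0 1 : ℝ) ≤ D * (s ^ m + 4) ^ (n / m) := by
  obtain ⟨T, hT⟩ := exists_isSlopeBreaks_iterate hs hmaps hf m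
  obtain ⟨ℓ, hℓ, hsep⟩ := T.exists_pos_le_abs_sub
  choose S hS using exists_isSlopeBreaks_iterate hs hmaps hf
  refine ⟨∑ b ∈ Finset.range m, ((S b).card + s ^ b / ℓ), fun n => ?_⟩
  obtain ⟨B, hB, hcard⟩ := exists_card_le_iterate hs hmaps hT hℓ hsep (hS (n % m)) (n / m)
  rw [Nat.div_add_mod'] at hB
  calc (lapNumber (f^[n]) 0 1 : ℝ) ≤ B.card := by
        exact_mod_cast hB.lapNumber_le.trans (Nat.sub_le _ _)
    _ ≤ _ := hcard
    _ ≤ _ := mul_le_mul_of_nonneg_right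
        (Finset.single_le_sum (f := fun b => ((S b).card : ℝ) + s ^ b / ℓ)
          (fun b _ => by positivity) (Finset.mem_range.2 (Nat.mod_lt n hm)))
        (by positivity)

end Iterate

theorem log_div_le_of_le_mul_pow {c D s : ℝ} {m n : ℕ} (hs : 1 ≤ s) (hm : 0 < m) (hn : 0 < n)
    (hc : 0 < c) (hcD : c ≤ D * (s ^ m + 4) ^ (n / m)) :
    Real.log c / n ≤ Real.log D / n + Real.log 5 / m + Real.log s := by
  have hsm : 1 ≤ s ^ m := one_le_pow₀ hs
  have hR : 0 < s ^ m + 4 := by linarith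
  have hD : 0 < D := (pos_iff_pos_of_mul_pos (hc.trans_le hcD)).2 (pow_pos hR _)
  have hlogR : Real.log (s ^ m + 4) ≤ Real.log 5 + m * Real.log s := by
    rw [← Real.log_pow, ← Real.log_mul (by norm_num) (by positivity)]
    exact Real.log_le_log hR (by linarith)
  have hn0 : (0 : ℝ) < n := by exact_mod_cast hn
  have hm0 : (0 : ℝ) < m := by exact_mod_cast hm
  calc Real.log c / n ≤ Real.log (D * (s ^ m + 4) ^ (n / m)) / n := by
        gcongr
    _ = (Real.log D + (n / m : ℕ) * Real.log (s ^ m + 4)) / n := by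
        rw [Real.log_mul hD.ne' (pow_pos hR _).ne', Real.log_pow]
    _ ≤ (Real.log D + n / m * (Real.log 5 + m * Real.log s)) / n := by
        gcongr
        · exact Real.log_nonneg (by linarith)
        · exact Nat.cast_div_le
    _ = Real.log D / n + Real.log 5 / m + Real.log s := by
        field_simp
        ring

theorem tendsto_log_div_of_le {c : ℕ → ℝ} {s : ℝ} (hs : 1 ≤ s) (hlow : ∀ n, s ^ n ≤ c n)
    (hup : ∀ m, 0 < m → ∃ D, ∀ n, c n ≤ D * (s ^ m + 4) ^ (n / m)) :
    Tendsto (fun n => Real.log (c n) / n) atTop (nhds (Real.log s)) := by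
  have hs0 : 0 < s := one_pos.trans_le hs
  refine tendsto_order.2 ⟨fun a ha => ?_, fun b hb => ?_⟩
  · filter_upwards [eventually_gt_atTop 0] with n hn
    calc a < Real.log s := ha
      _ = Real.log (s ^ n) / n := by rw [Real.log_pow]; field_simp
      _ ≤ Real.log (c n) / n := by gcongr; exact hlow n
  set δ := b - Real.log s
  have hδ : 0 < δ := sub_pos.2 hb
  obtain ⟨m, hm⟩ := exists_nat_gt (2 * Real.log 5 / δ)
  have hm0 : (0 : ℝ) < m := (div_pos (by positivity) hδ).trans hm
  have hlog5 : Real.log 5 / m < δ / 2 := by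
    rw [div_lt_iff₀ hm0]
    linarith [(div_lt_iff₀ hδ).1 hm]
  obtain ⟨D, hD⟩ := hup m (by exact_mod_cast hm0)
  filter_upwards [eventually_gt_atTop 0,
    (tendsto_const_div_atTop_nhds_zero_nat (Real.log D)).eventually (gt_mem_nhds (half_pos hδ))]
    with n hn hDn
  have := log_div_le_of_le_mul_pow hs (by exact_mod_cast hm0) hn
    ((pow_pos hs0 n).trans_le (hlow n)) (hD n)
  linarith

theorem stmt0_general (f : ℝ → ℝ) (s : ℝ) (hs : 1 ≤ s)
    (hm : Set.MapsTo f (Set.Icc 0 1) (Set.Icc 0 1))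
    (haff : ∃ k : ℕ, 0 < k ∧ ∃ t : ℕ → ℝ, t 0 = 0 ∧ t k = 1 ∧
      (∀ i < k, t i < t (i + 1)) ∧
      ∀ i < k, ∃ ε d : ℝ, (ε = 1 ∨ ε = -1) ∧
        ∀ x ∈ Set.Icc (t i) (t (i + 1)), f x = ε * s * x + d) :
    Tendsto (fun n : ℕ => Real.log (lapNumber (f^[n]) 0 1) / n) atTop
      (nhds (Real.log s)) := by
  have hs0 : 0 < s := one_pos.trans_le hs
  obtain ⟨k, hk, t, h0, h1, hlt, hpieces⟩ := haff
  have hf := isSlopeBreaks_of_partition (F := f) (σ := s) hk h0 h1 hlt fun i hi => by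
    obtain ⟨ε, d, hε, hfd⟩ := hpieces i hi
    exact ⟨ε * s, d, by rcases hε with rfl | rfl <;> simp [abs_of_pos hs0], hfd⟩
  refine tendsto_log_div_of_le (c := fun n => (lapNumber (f^[n]) 0 1 : ℝ)) hs (fun n => ?_)
    fun m hm0 => exists_lapNumber_le hs0 hm hf hm0
  obtain ⟨S, hS⟩ := exists_isSlopeBreaks_iterate hs0 hm hf n
  exact hS.le_lapNumber (hm.iterate n)

/-- A piecewise monotone continuous interval map with constant slope `s ≥ 1`
has topological entropy `log s`. -/
theorem stmt0 (f : ℝ → ℝ) (s : ℝ) (hs : 1 ≤ s)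
    (hc : ContinuousOn f (Set.Icc 0 1))
    (hm : Set.MapsTo f (Set.Icc 0 1) (Set.Icc 0 1))
    (haff : ∃ k : ℕ, 0 < k ∧ ∃ t : ℕ → ℝ, t 0 = 0 ∧ t k = 1 ∧
      (∀ i < k, t i < t (i + 1)) ∧
      ∀ i < k, ∃ ε d : ℝ, (ε = 1 ∨ ε = -1) ∧
        ∀ x ∈ Set.Icc (t i) (t (i + 1)), f x = ε * s * x + d) :
    Tendsto (fun n : ℕ => Real.log (lapNumber (f^[n]) 0 1) / n) atTop
      (nhds (Real.log s)) :=
  stmt0_general f s hs hm haff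
end

section
/- Let f be an l-modal map and for n ≥ 1 let s^(n) be the number of new intersections of the graph of f^n with the critical lines (points x with f^n(x) = c_i for some i, and f^k(x) ≠ c_j for all k < n, j). Then the lap number of f^n satisfies ℓ(f^n) = 1 + Σ_{k=0}^{n−1} s^(k), where s^(0) = l. -/
open Set Filter

/-- A marked piecewise strictly monotone structure with alternating directions. -/
def Marked (g : ℝ → ℝ) (a b : ℝ) (N : ℕ) (u : ℕ → ℝ) (d : ℕ → Bool) : Prop :=
  u 0 = a ∧ u N = b ∧ (∀ i < N, u i < u (i + 1)) ∧
  (∀ i < N, (d i = true → StrictMonoOn g (Set.Icc (u i) (u (i + 1)))) ∧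
            (d i = false → StrictAntiOn g (Set.Icc (u i) (u (i + 1))))) ∧
  (∀ i, i + 1 < N → d (i + 1) = !(d i))

/-- strict increase along indices -/
lemma seq_lt {u : ℕ → ℝ} {N : ℕ} (h : ∀ i < N, u i < u (i + 1)) :
    ∀ {i j}, i < j → j ≤ N → u i < u j := by
  intro i j hij hjN
  induction j with
  | zero => omega
  | succ m ih =>
    rcases Nat.lt_or_ge i m with hm | hm
    · exact (ih hm (by omega)).trans (h m (by omega))
    · have : i = m := by omega
      subst this; exact h i (by omega)

lemma seq_le {u : ℕ → ℝ} {N : ℕ} (h : ∀ i < N, u i < u (i + 1)) :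
    ∀ {i j}, i ≤ j → j ≤ N → u i ≤ u j := by
  intro i j hij hjN
  rcases Nat.lt_or_ge i j with hlt | hge
  · exact (seq_lt h hlt hjN).le
  · have : i = j := by omega
    simp [this]

/-- find the gap containing `x` -/
lemma findGap (v : ℕ → ℝ) : ∀ (M : ℕ) {x : ℝ}, 0 < M → v 0 ≤ x → x < v M →
    ∃ i < M, v i ≤ x ∧ x < v (i + 1) := by
  intro M
  induction M with
  | zero => omega
  | succ m ih =>
    intro x _ h0 hxm
    by_cases hx : x < v m
    · rcases Nat.eq_zero_or_pos m with hm | hm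
      · subst hm; exact absurd (h0.trans_lt hx) (lt_irrefl _)
      · obtain ⟨i, hi, h1, h2⟩ := ih hm h0 hx
        exact ⟨i, by omega, h1, h2⟩
    · exact ⟨m, by omega, not_lt.1 hx, hxm⟩

/-- strict local extremum at interior marks -/
lemma marked_extremum {g : ℝ → ℝ} {a b : ℝ} {N : ℕ} {u : ℕ → ℝ} {d : ℕ → Bool}
    (hm : Marked g a b N u d) {i : ℕ} (hi : i + 1 < N) :
    (∀ y ∈ Set.Icc (u i) (u (i + 2)), y ≠ u (i + 1) → g y < g (u (i + 1))) ∨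
    (∀ y ∈ Set.Icc (u i) (u (i + 2)), y ≠ u (i + 1) → g (u (i + 1)) < g y) := by
  obtain ⟨hu0, huN, hinc, hdir, halt⟩ := hm
  have h1 : u i < u (i + 1) := hinc i (by omega)
  have h2 : u (i + 1) < u (i + 2) := hinc (i + 1) hi
  have hflip := halt i hi
  cases hd : d i with
  | true =>
    have hL := (hdir i (by omega)).1 hd
    have hR := (hdir (i + 1) hi).2 (by rw [hflip, hd]; rfl)
    left
    intro y hy hne
    rcases le_or_gt y (u (i + 1)) with hc | hc
    · have : y < u (i + 1) := lt_of_le_of_ne hc hne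
      exact hL ⟨hy.1, hc⟩ ⟨h1.le, le_refl _⟩ this
    · exact hR ⟨le_refl _, h2.le⟩ ⟨hc.le, hy.2⟩ hc
  | false =>
    have hL := (hdir i (by omega)).2 hd
    have hR := (hdir (i + 1) hi).1 (by rw [hflip, hd]; rfl)
    right
    intro y hy hne
    rcases le_or_gt y (u (i + 1)) with hc | hc
    · have : y < u (i + 1) := lt_of_le_of_ne hc hne
      exact hL ⟨hy.1, hc⟩ ⟨h1.le, le_refl _⟩ this
    · exact hR ⟨le_refl _, h2.le⟩ ⟨hc.le, hy.2⟩ hc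

lemma marked_lapNumber {g : ℝ → ℝ} {a b : ℝ} {N : ℕ} {u : ℕ → ℝ} {d : ℕ → Bool}
    (hm : Marked g a b N u d) (hN : 0 < N) : lapNumber g a b = N := by
  obtain ⟨hu0, huN, hinc, hdir, halt⟩ := hm
  have hmem : N ∈ {k | 0 < k ∧ IsLapPartition g a b k} := by
    refine ⟨hN, u, hu0, huN, hinc, fun i hi => ?_⟩
    cases hd : d i with
    | true => exact Or.inl ((hdir i hi).1 hd).monotoneOn
    | false => exact Or.inr ((hdir i hi).2 hd).antitoneOn
  have hlow : ∀ k ∈ {k | 0 < k ∧ IsLapPartition g a b k}, N ≤ k := by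
    rintro k ⟨hk, s, hs0, hsk, hsinc, hsmono⟩
    -- each interior mark is a partition point
    have key : ∀ m ∈ Finset.Ioo 0 N, ∃ j ∈ Finset.Ioo 0 k, s j = u m := by
      intro m hm'
      rw [Finset.mem_Ioo] at hm'
      obtain ⟨hm0, hmN⟩ := hm'
      set x := u m with hx
      have hxa : a < x := by rw [← hu0]; exact seq_lt hinc hm0 (by omega)
      have hxb : x < b := by rw [← huN]; exact seq_lt hinc hmN (le_refl _)
      -- find the partition piece containing x
      obtain ⟨j, hj, hj1, hj2⟩ :=
        findGap s k (x := x) hk (by rw [hs0]; exact hxa.le) (by rw [hsk]; exact hxb)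
      -- x is a strict local extremum
      obtain ⟨m', rfl⟩ : ∃ m', m = m' + 1 := ⟨m - 1, by omega⟩
      have hext := marked_extremum ⟨hu0, huN, hinc, hdir, halt⟩ (show m' + 1 < N from hmN)
      have h1 : u m' < u (m' + 1) := hinc m' (by omega)
      have h2 : u (m' + 1) < u (m' + 2) := hinc (m' + 1) hmN
      -- show x = s j
      have hxsj : x = s j := by
        by_contra hne
        have hjx : s j < x := lt_of_le_of_ne hj1 (Ne.symm hne)
        set p := max (s j) (u m') with hp
        set q := min (s (j + 1)) (u (m' + 2)) with hq
        have hpx : p < x := max_lt hjx h1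
        have hxq : x < q := lt_min hj2 h2
        have hpP : p ∈ Set.Icc (s j) (s (j + 1)) :=
          ⟨le_max_left _ _, (hpx.trans hxq).le.trans (min_le_left _ _)⟩
        have hqP : q ∈ Set.Icc (s j) (s (j + 1)) :=
          ⟨(le_max_left _ _).trans (hpx.trans hxq).le, min_le_left _ _⟩
        have hxP : x ∈ Set.Icc (s j) (s (j + 1)) := ⟨hj1, hj2.le⟩
        have hpU : p ∈ Set.Icc (u m') (u (m' + 2)) :=
          ⟨le_max_right _ _, (hpx.trans hxq).le.trans (min_le_right _ _)⟩
        have hqU : q ∈ Set.Icc (u m') (u (m' + 2)) :=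
          ⟨(le_max_right _ _).trans (hpx.trans hxq).le, min_le_right _ _⟩
        rcases hext with hmax | hmin
        · have hgq : g q < g x := hmax q hqU hxq.ne'
          have hgp : g p < g x := hmax p hpU hpx.ne
          rcases hsmono j hj with hmono | hanti
          · exact absurd (hmono hxP hqP hxq.le) (not_le.2 hgq)
          · exact absurd (hanti hpP hxP hpx.le) (not_le.2 hgp)
        · have hgq : g x < g q := hmin q hqU hxq.ne'
          have hgp : g x < g p := hmin p hpU hpx.ne
          rcases hsmono j hj with hmono | hanti
          · exact absurd (hmono hpP hxP hpx.le) (not_le.2 hgp)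
          · exact absurd (hanti hxP hqP hxq.le) (not_le.2 hgq)
      refine ⟨j, Finset.mem_Ioo.2 ⟨?_, hj⟩, hxsj.symm⟩
      rcases Nat.eq_zero_or_pos j with rfl | hj0
      · rw [hs0] at hxsj; exact absurd hxsj (ne_of_gt hxa)
      · exact hj0
    choose! e he hs using key
    have hcard := Finset.card_le_card_of_injOn e he ?inj
    · rw [Nat.card_Ioo, Nat.card_Ioo] at hcard
      omega
    case inj =>
      intro m hm' m' hm'' heq
      have e1 := hs m hm'
      have e2 := hs m' hm''
      rw [heq, e2] at e1
      rw [Finset.mem_coe, Finset.mem_Ioo] at hm' hm''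
      by_contra hne
      rcases Nat.lt_or_ge m m' with hlt | hge
      · exact absurd e1.symm (ne_of_lt (seq_lt hinc hlt (by omega)))
      · exact absurd e1 (ne_of_lt (seq_lt hinc (show m' < m by omega) (by omega)))
  exact le_antisymm (Nat.sInf_le hmem) (le_csInf ⟨N, hmem⟩ hlow)

def IsLModal (f : ℝ → ℝ) (l : ℕ) (t : ℕ → ℝ) : Prop :=
  ContinuousOn f (Set.Icc (t 0) (t (l + 1))) ∧
  Set.MapsTo f (Set.Icc (t 0) (t (l + 1))) (Set.Icc (t 0) (t (l + 1))) ∧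
  (∀ i ≤ l, t i < t (i + 1)) ∧
  (f (t 0) = t 0 ∨ f (t 0) = t (l + 1)) ∧
  (f (t (l + 1)) = t 0 ∨ f (t (l + 1)) = t (l + 1)) ∧
  (∀ i ≤ l, StrictMonoOn f (Set.Icc (t i) (t (i + 1))) ∨
    StrictAntiOn f (Set.Icc (t i) (t (i + 1)))) ∧
  (∀ i < l, ¬ MonotoneOn f (Set.Icc (t i) (t (i + 2))) ∧
    ¬ AntitoneOn f (Set.Icc (t i) (t (i + 2))))

lemma smo_union_mono {g : ℝ → ℝ} {p q r : ℝ} (h1 : StrictMonoOn g (Set.Icc p q))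
    (h2 : StrictMonoOn g (Set.Icc q r)) (hpq : p ≤ q) (hqr : q ≤ r) :
    MonotoneOn g (Set.Icc p r) := by
  intro x hx y hy hxy
  rcases le_total y q with h | h
  · exact h1.monotoneOn ⟨hx.1, hxy.trans h⟩ ⟨hy.1, h⟩ hxy
  · rcases le_total x q with h' | h'
    · exact (h1.monotoneOn ⟨hx.1, h'⟩ ⟨hpq, le_refl _⟩ h').trans
        (h2.monotoneOn ⟨le_refl _, hqr⟩ ⟨h, hy.2⟩ h)
    · exact h2.monotoneOn ⟨h', hx.2⟩ ⟨h'.trans hxy, hy.2⟩ hxy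

lemma sao_union_anti {g : ℝ → ℝ} {p q r : ℝ} (h1 : StrictAntiOn g (Set.Icc p q))
    (h2 : StrictAntiOn g (Set.Icc q r)) (hpq : p ≤ q) (hqr : q ≤ r) :
    AntitoneOn g (Set.Icc p r) := by
  intro x hx y hy hxy
  rcases le_total y q with h | h
  · exact h1.antitoneOn ⟨hx.1, hxy.trans h⟩ ⟨hy.1, h⟩ hxy
  · rcases le_total x q with h' | h'
    · exact ((h2.antitoneOn ⟨le_refl _, hqr⟩ ⟨h, hy.2⟩ h).trans
        (h1.antitoneOn ⟨hx.1, h'⟩ ⟨hpq, le_refl _⟩ h'))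
    · exact h2.antitoneOn ⟨h', hx.2⟩ ⟨h'.trans hxy, hy.2⟩ hxy

section ModalHelpers
variable {f : ℝ → ℝ} {l : ℕ} {t : ℕ → ℝ}

lemma tinc (hf : IsLModal f l t) : ∀ i < l + 1, t i < t (i + 1) :=
  fun i hi => hf.2.2.1 i (by omega)

lemma tlt (hf : IsLModal f l t) {i j : ℕ} (hij : i < j) (hj : j ≤ l + 1) : t i < t j :=
  seq_lt (tinc hf) hij hj

lemma tidx_le (hf : IsLModal f l t) {i j : ℕ} (h : t i ≤ t j) (hi : i ≤ l + 1) : i ≤ j := by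
  by_contra hc
  exact absurd h (not_le.2 (tlt hf (by omega) hi))

/-- `f` has opposite strict directions on adjacent laps. -/
lemma lapflip (hf : IsLModal f l t) {j : ℕ} (hj : j < l) :
    (StrictMonoOn f (Set.Icc (t j) (t (j + 1))) ∧
      StrictAntiOn f (Set.Icc (t (j + 1)) (t (j + 2)))) ∨
    (StrictAntiOn f (Set.Icc (t j) (t (j + 1))) ∧
      StrictMonoOn f (Set.Icc (t (j + 1)) (t (j + 2)))) := by
  have h1 := hf.2.2.2.2.2.1 j (by omega)
  have h2 := hf.2.2.2.2.2.1 (j + 1) (by omega)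
  have ht1 : t j ≤ t (j + 1) := (tlt hf (by omega) (by omega)).le
  have ht2 : t (j + 1) ≤ t (j + 2) := (tlt hf (by omega) (by omega)).le
  rcases h1 with h1 | h1 <;> rcases h2 with h2 | h2
  · exact absurd (smo_union_mono h1 h2 ht1 ht2) (hf.2.2.2.2.2.2 j hj).1
  · exact Or.inl ⟨h1, h2⟩
  · exact Or.inr ⟨h1, h2⟩
  · exact absurd (sao_union_anti h1 h2 ht1 ht2) (hf.2.2.2.2.2.2 j hj).2

/-- any interval in `[a,b]` not containing a critical point in its interior lies in a lap -/
lemma lap_contains (hf : IsLModal f l t) {p q : ℝ} (hap : t 0 ≤ p) (hpq : p ≤ q)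
    (hqb : q ≤ t (l + 1)) (hnoC : ∀ j, 1 ≤ j → j ≤ l → t j ∉ Set.Ioo p q) :
    ∃ j ≤ l, t j ≤ p ∧ q ≤ t (j + 1) := by
  rcases lt_or_ge p (t (l + 1)) with hpb | hpb
  · obtain ⟨i, hi, h1, h2⟩ := findGap t (l + 1) (x := p) (by omega) hap hpb
    refine ⟨i, by omega, h1, ?_⟩
    rcases Nat.lt_or_ge (i + 1) (l + 1) with h | h
    · by_contra hq
      exact hnoC (i + 1) (by omega) (by omega) ⟨h2, not_le.1 hq⟩
    · have : i + 1 = l + 1 := by omega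
      rw [this]; exact hqb
  · have hpb' : p = t (l + 1) := le_antisymm (hpq.trans hqb) hpb
    exact ⟨l, le_refl _, by rw [hpb']; exact (tlt hf (by omega) (le_refl _)).le,
      by rw [← hpb'] at hqb ⊢; exact hqb⟩

end ModalHelpers

/-- any interval avoiding all interior marks lies in a single gap -/
lemma gap_contains {u : ℕ → ℝ} {N : ℕ} {a b : ℝ} (hu0 : u 0 = a) (huN : u N = b)
    (hinc : ∀ i < N, u i < u (i + 1)) (hN : 0 < N) {s s' : ℝ} (has : a ≤ s) (hss : s < s')
    (hs'b : s' ≤ b) (hno : ∀ i, 0 < i → i < N → u i ∉ Set.Ioo s s') :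
    ∃ i < N, u i ≤ s ∧ s' ≤ u (i + 1) := by
  have hsb : s < b := hss.trans_le hs'b
  obtain ⟨i, hi, h1, h2⟩ := findGap u N (x := s) hN (by rw [hu0]; exact has)
    (by rw [huN]; exact hsb)
  refine ⟨i, hi, h1, ?_⟩
  rcases Nat.lt_or_ge (i + 1) N with h | h
  · by_contra hq
    exact hno (i + 1) (by omega) h ⟨h2, not_le.1 hq⟩
  · have : i + 1 = N := by omega
    rw [this, huN]; exact hs'b
lemma stepLemma (f : ℝ → ℝ) (l : ℕ) (t : ℕ → ℝ) (hf : IsLModal f l t) (hl : 0 < l)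
    (g : ℝ → ℝ) (N : ℕ) (u : ℕ → ℝ) (d : ℕ → Bool)
    (hgc : ContinuousOn g (Set.Icc (t 0) (t (l + 1))))
    (hgmap : Set.MapsTo g (Set.Icc (t 0) (t (l + 1))) (Set.Icc (t 0) (t (l + 1))))
    (hga : ∀ j, 1 ≤ j → j ≤ l → g (t 0) ≠ t j)
    (hgb : ∀ j, 1 ≤ j → j ≤ l → g (t (l + 1)) ≠ t j)
    (hm : Marked g (t 0) (t (l + 1)) N u d) :
    ∃ N' u' d', Marked (f ∘ g) (t 0) (t (l + 1)) N' u' d' ∧ 0 < N' ∧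
      ∀ x : ℝ, (∃ i, 0 < i ∧ i < N' ∧ u' i = x) ↔
        ((∃ i, 0 < i ∧ i < N ∧ u i = x) ∨
         (x ∈ Set.Icc (t 0) (t (l + 1)) ∧ ∃ j, 1 ≤ j ∧ j ≤ l ∧ g x = t j)) := by
  classical
  set a := t 0 with ha
  set b := t (l + 1) with hb
  obtain ⟨hu0, huN, hinc, hdir, halt⟩ := hm
  have hab : a < b := tlt hf (by omega) (le_refl _)
  have hN : 0 < N := by
    rcases Nat.eq_zero_or_pos N with rfl | h
    · rw [hu0] at huN; exact absurd huN (ne_of_lt hab)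
    · exact h
  set M : Set ℝ := {x | ∃ i, 0 < i ∧ i < N ∧ u i = x} with hMdef
  set Cpre : Set ℝ := {x | x ∈ Set.Icc a b ∧ ∃ j, 1 ≤ j ∧ j ≤ l ∧ g x = t j} with hCdef
  set W : Set ℝ := M ∪ Cpre with hWdef
  have hM_sub : M ⊆ Set.Ioo a b := by
    rintro x ⟨i, hi0, hiN, rfl⟩
    exact ⟨hu0 ▸ seq_lt hinc hi0 (by omega), huN ▸ seq_lt hinc hiN (le_refl _)⟩
  have hW_sub : W ⊆ Set.Icc a b := by
    rintro x (hx | hx)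
    · exact Set.Ioo_subset_Icc_self (hM_sub hx)
    · exact hx.1
  have haW : a ∉ W := by
    rintro (h | ⟨-, j, hj1, hjl, hj⟩)
    · exact absurd (hM_sub h).1 (lt_irrefl _)
    · exact hga j hj1 hjl hj
  have hbW : b ∉ W := by
    rintro (h | ⟨-, j, hj1, hjl, hj⟩)
    · exact absurd (hM_sub h).2 (lt_irrefl _)
    · exact hgb j hj1 hjl hj
  -- no mark in an empty interval
  have hnoM : ∀ {s s' : ℝ}, Set.Ioo s s' ∩ W = ∅ → ∀ i, 0 < i → i < N → u i ∉ Set.Ioo s s' := by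
    intro s s' hem i h1 h2 hmem
    exact (Set.eq_empty_iff_forall_notMem.1 hem (u i)) ⟨hmem, Or.inl ⟨i, h1, h2, rfl⟩⟩
  -- g is strictly monotone on intervals avoiding old marks
  have gapmono : ∀ s s', s < s' → s ∈ Set.Icc a b → s' ∈ Set.Icc a b →
      (∀ i, 0 < i → i < N → u i ∉ Set.Ioo s s') →
      StrictMonoOn g (Set.Icc s s') ∨ StrictAntiOn g (Set.Icc s s') := by
    intro s s' hss hs hs' hem
    obtain ⟨i, hiN, hui, hui'⟩ := gap_contains hu0 huN hinc hN hs.1 hss hs'.2 hem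
    have hsub : Set.Icc s s' ⊆ Set.Icc (u i) (u (i + 1)) := Set.Icc_subset_Icc hui hui'
    cases hd : d i with
    | true => exact Or.inl (((hdir i hiN).1 hd).mono hsub)
    | false => exact Or.inr (((hdir i hiN).2 hd).mono hsub)
  -- critical values are not crossed over empty intervals
  have hitC : ∀ s s', s < s' → s ∈ Set.Icc a b → s' ∈ Set.Icc a b → Set.Ioo s s' ∩ W = ∅ →
      ∀ j, 1 ≤ j → j ≤ l →
        t j ∉ Set.Ioo (min (g s) (g s')) (max (g s) (g s')) := by
    intro s s' hss hs hs' hem j hj1 hjl hmem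
    have hIccsub : Set.Icc s s' ⊆ Set.Icc a b := Set.Icc_subset_Icc hs.1 hs'.2
    have hgc' : ContinuousOn g (Set.Icc s s') := hgc.mono hIccsub
    have himg : t j ∈ g '' Set.Icc s s' := by
      rcases le_total (g s) (g s') with h | h
      · rw [min_eq_left h, max_eq_right h] at hmem
        exact intermediate_value_Icc hss.le hgc' ⟨hmem.1.le, hmem.2.le⟩
      · rw [min_eq_right h, max_eq_left h] at hmem
        exact intermediate_value_Icc' hss.le hgc' ⟨hmem.1.le, hmem.2.le⟩
    obtain ⟨x₀, hx₀, hgx₀⟩ := himg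
    have hx₀s : x₀ ≠ s := by
      intro h
      rw [← h, hgx₀] at hmem
      have h1 := hmem.1; have h2 := hmem.2
      rw [inf_lt_iff] at h1; rw [lt_sup_iff] at h2
      rcases h1 with h1 | h1 <;> rcases h2 with h2 | h2 <;> linarith
    have hx₀s' : x₀ ≠ s' := by
      intro h
      rw [← h, hgx₀] at hmem
      have h1 := hmem.1; have h2 := hmem.2
      rw [inf_lt_iff] at h1; rw [lt_sup_iff] at h2
      rcases h1 with h1 | h1 <;> rcases h2 with h2 | h2 <;> linarith
    refine (Set.eq_empty_iff_forall_notMem.1 hem x₀) ⟨⟨lt_of_le_of_ne hx₀.1 (Ne.symm hx₀s),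
      lt_of_le_of_ne hx₀.2 hx₀s'⟩, Or.inr ⟨hIccsub hx₀, j, hj1, hjl, hgx₀⟩⟩
  -- the image of an empty interval lies in a single lap
  have gapcore : ∀ s s', s < s' → s ∈ Set.Icc a b → s' ∈ Set.Icc a b →
      Set.Ioo s s' ∩ W = ∅ →
      ∃ j ≤ l, Set.MapsTo g (Set.Icc s s') (Set.Icc (t j) (t (j + 1))) ∧
        (StrictMonoOn g (Set.Icc s s') ∨ StrictAntiOn g (Set.Icc s s')) := by
    intro s s' hss hs hs' hem
    have hgm := gapmono s s' hss hs hs' (hnoM hem)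
    have hsmem : s ∈ Set.Icc s s' := Set.left_mem_Icc.2 hss.le
    have hs'mem : s' ∈ Set.Icc s s' := Set.right_mem_Icc.2 hss.le
    have hgs : g s ∈ Set.Icc a b := hgmap hs
    have hgs' : g s' ∈ Set.Icc a b := hgmap hs'
    rcases hgm with hmono | hanti
    · have hle : g s ≤ g s' := (hmono hsmem hs'mem hss).le
      obtain ⟨j, hjl, hj1, hj2⟩ := lap_contains hf (p := g s) (q := g s') hgs.1 hle hgs'.2
        (by intro j h1 h2 hc
            exact hitC s s' hss hs hs' hem j h1 h2
              (by rwa [min_eq_left hle, max_eq_right hle]))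
      refine ⟨j, hjl, fun x hx => ⟨hj1.trans (hmono.monotoneOn hsmem hx hx.1), 
        (hmono.monotoneOn hx hs'mem hx.2).trans hj2⟩, Or.inl hmono⟩
    · have hle : g s' ≤ g s := (hanti hsmem hs'mem hss).le
      obtain ⟨j, hjl, hj1, hj2⟩ := lap_contains hf (p := g s') (q := g s) hgs'.1 hle hgs.2
        (by intro j h1 h2 hc
            exact hitC s s' hss hs hs' hem j h1 h2
              (by rwa [min_eq_right hle, max_eq_left hle]))
      refine ⟨j, hjl, fun x hx => ⟨hj1.trans (hanti.antitoneOn hx hs'mem hx.2),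
        (hanti.antitoneOn hsmem hx hx.1).trans hj2⟩, Or.inr hanti⟩
  have gapcomp : ∀ s s', s < s' → s ∈ Set.Icc a b → s' ∈ Set.Icc a b →
      Set.Ioo s s' ∩ W = ∅ →
      StrictMonoOn (f ∘ g) (Set.Icc s s') ∨ StrictAntiOn (f ∘ g) (Set.Icc s s') := by
    intro s s' hss hs hs' hem
    obtain ⟨j, hjl, hmaps, hgm⟩ := gapcore s s' hss hs hs' hem
    rcases hf.2.2.2.2.2.1 j hjl with hfm | hfm <;> rcases hgm with h | h
    · exact Or.inl (hfm.comp h hmaps)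
    · exact Or.inr (hfm.comp_strictAntiOn h hmaps)
    · exact Or.inr (hfm.comp_strictMonoOn h hmaps)
    · exact Or.inl (hfm.comp h hmaps)
  -- strict local extremum of f ∘ g at every point of W
  have extremum : ∀ s x s', s < x → x < s' → s ∈ Set.Icc a b → s' ∈ Set.Icc a b → x ∈ W →
      Set.Ioo s x ∩ W = ∅ → Set.Ioo x s' ∩ W = ∅ →
      (∀ y ∈ Set.Icc s s', y ≠ x → (f ∘ g) y < (f ∘ g) x) ∨
      (∀ y ∈ Set.Icc s s', y ≠ x → (f ∘ g) x < (f ∘ g) y) := by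
    intro s x s' hsx hxs' hs hs' hxW hem1 hem2
    have hx : x ∈ Set.Icc a b := ⟨hs.1.trans hsx.le, hxs'.le.trans hs'.2⟩
    have hxmem : x ∈ Set.Icc s s' := ⟨hsx.le, hxs'.le⟩
    have hsmem : s ∈ Set.Icc s s' := Set.left_mem_Icc.2 (hsx.trans hxs').le
    have hs'mem : s' ∈ Set.Icc s s' := Set.right_mem_Icc.2 (hsx.trans hxs').le
    have uilt : ∀ {i j : ℕ}, u i < u j → i ≤ N → j ≤ N → i < j := by
      intro i j hij hi hj
      by_contra hc
      exact absurd hij (not_lt.2 (seq_le hinc (by omega) hi))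
    have uile : ∀ {i j : ℕ}, u i ≤ u j → i ≤ N → j ≤ N → i ≤ j := by
      intro i j hij hi hj
      by_contra hc
      exact absurd hij (not_le.2 (seq_lt hinc (by omega) hi))
    by_cases hxM : x ∈ M
    · -- case: x is an old mark, so g has a strict local extremum at x
      obtain ⟨i₀, hi₀0, hi₀N, hui₀⟩ := hxM
      obtain ⟨i₁, hi₁N, ha1, hb1⟩ := gap_contains hu0 huN hinc hN hs.1 hsx hx.2 (hnoM hem1)
      obtain ⟨i₂, hi₂N, ha2, hb2⟩ := gap_contains hu0 huN hinc hN hx.1 hxs' hs'.2 (hnoM hem2)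
      have e1 : i₁ + 1 = i₀ := by
        have hA : i₁ < i₀ := uilt (lt_of_le_of_lt ha1 (hui₀ ▸ hsx)) (by omega) (by omega)
        have hB : i₀ ≤ i₁ + 1 := uile (le_of_eq_of_le hui₀ hb1) (by omega) (by omega)
        omega
      have e2 : i₂ = i₀ := by
        have hA : i₂ ≤ i₀ := uile (le_of_le_of_eq ha2 hui₀.symm) (by omega) (by omega)
        have hB : i₀ < i₂ + 1 := uilt (lt_of_eq_of_lt hui₀ (hxs'.trans_le hb2)) (by omega) (by omega)
        omega
      have hsubL : Set.Icc s x ⊆ Set.Icc (u i₁) (u (i₁ + 1)) := Set.Icc_subset_Icc ha1 hb1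
      have hsubR : Set.Icc x s' ⊆ Set.Icc (u i₂) (u (i₂ + 1)) := Set.Icc_subset_Icc ha2 hb2
      have hd2 : d i₂ = !(d i₁) := by
        rw [show i₂ = i₁ + 1 by omega]
        exact halt i₁ (by omega)
      have gext : (∀ y ∈ Set.Icc s s', y ≠ x → g y < g x) ∨
          (∀ y ∈ Set.Icc s s', y ≠ x → g x < g y) := by
        cases hd : d i₁ with
        | true =>
          have hL : StrictMonoOn g (Set.Icc s x) := ((hdir i₁ hi₁N).1 hd).mono hsubL
          have hR : StrictAntiOn g (Set.Icc x s') :=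
            ((hdir i₂ hi₂N).2 (by rw [hd2, hd]; rfl)).mono hsubR
          left; intro y hy hne
          rcases le_or_gt y x with hc | hc
          · exact hL ⟨hy.1, hc⟩ (Set.right_mem_Icc.2 hsx.le) (lt_of_le_of_ne hc hne)
          · exact hR (Set.left_mem_Icc.2 hxs'.le) ⟨hc.le, hy.2⟩ hc
        | false =>
          have hL : StrictAntiOn g (Set.Icc s x) := ((hdir i₁ hi₁N).2 hd).mono hsubL
          have hR : StrictMonoOn g (Set.Icc x s') :=
            ((hdir i₂ hi₂N).1 (by rw [hd2, hd]; rfl)).mono hsubR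
          right; intro y hy hne
          rcases le_or_gt y x with hc | hc
          · exact hL ⟨hy.1, hc⟩ (Set.right_mem_Icc.2 hsx.le) (lt_of_le_of_ne hc hne)
          · exact hR (Set.left_mem_Icc.2 hxs'.le) ⟨hc.le, hy.2⟩ hc
      rcases gext with hmax | hmin
      · -- g has a strict max at x
        have hgsY : g s < g x := hmax s hsmem hsx.ne
        have hgs'Y : g s' < g x := hmax s' hs'mem hxs'.ne'
        have hL : StrictMonoOn g (Set.Icc s x) := by
          rcases gapmono s x hsx hs hx (hnoM hem1) with h | h
          · exact h
          · exact absurd (h (Set.left_mem_Icc.2 hsx.le) (Set.right_mem_Icc.2 hsx.le) hsx)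
              (not_lt.2 hgsY.le)
        have hR : StrictAntiOn g (Set.Icc x s') := by
          rcases gapmono x s' hxs' hx hs' (hnoM hem2) with h | h
          · exact absurd (h (Set.left_mem_Icc.2 hxs'.le) (Set.right_mem_Icc.2 hxs'.le) hxs')
              (not_lt.2 hgs'Y.le)
          · exact h
        have hnoC' : ∀ j, 1 ≤ j → j ≤ l → t j ∉ Set.Ioo (min (g s) (g s')) (g x) := by
          intro j a1 a2 hc
          rcases lt_or_ge (g s) (t j) with h' | h'
          · exact hitC s x hsx hs hx hem1 j a1 a2
              (by rw [min_eq_left hgsY.le, max_eq_right hgsY.le]; exact ⟨h', hc.2⟩)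
          · have hgs'lt : g s' < t j := by
              by_contra hcc
              push_neg at hcc
              exact absurd hc.1 (not_lt.2 (le_min h' hcc))
            exact hitC x s' hxs' hx hs' hem2 j a1 a2
              (by rw [min_eq_right hgs'Y.le, max_eq_left hgs'Y.le]; exact ⟨hgs'lt, hc.2⟩)
        obtain ⟨j, hjl, hj1, hj2⟩ := lap_contains hf (le_min (hgmap hs).1 (hgmap hs').1)
          ((min_le_left _ _).trans hgsY.le) (hgmap hx).2 hnoC'
        have hmaps : Set.MapsTo g (Set.Icc s s') (Set.Icc (t j) (t (j + 1))) := by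
          intro y hy
          refine ⟨hj1.trans ?_, ?_⟩
          · rcases le_total y x with hc | hc
            · exact (min_le_left _ _).trans (hL.monotoneOn (Set.left_mem_Icc.2 hsx.le)
                ⟨hy.1, hc⟩ hy.1)
            · exact (min_le_right _ _).trans (hR.antitoneOn ⟨hc, hy.2⟩
                (Set.right_mem_Icc.2 hxs'.le) hy.2)
          · refine le_trans ?_ hj2
            rcases eq_or_ne y x with rfl | hne
            · exact le_refl _
            · exact (hmax y hy hne).le
        rcases hf.2.2.2.2.2.1 j hjl with hfm | hfm
        · left; intro y hy hne
          exact hfm (hmaps hy) (hmaps hxmem) (hmax y hy hne)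
        · right; intro y hy hne
          exact hfm (hmaps hy) (hmaps hxmem) (hmax y hy hne)
      · -- g has a strict min at x
        have hgsY : g x < g s := hmin s hsmem hsx.ne
        have hgs'Y : g x < g s' := hmin s' hs'mem hxs'.ne'
        have hL : StrictAntiOn g (Set.Icc s x) := by
          rcases gapmono s x hsx hs hx (hnoM hem1) with h | h
          · exact absurd (h (Set.left_mem_Icc.2 hsx.le) (Set.right_mem_Icc.2 hsx.le) hsx)
              (not_lt.2 hgsY.le)
          · exact h
        have hR : StrictMonoOn g (Set.Icc x s') := by
          rcases gapmono x s' hxs' hx hs' (hnoM hem2) with h | h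
          · exact h
          · exact absurd (h (Set.left_mem_Icc.2 hxs'.le) (Set.right_mem_Icc.2 hxs'.le) hxs')
              (not_lt.2 hgs'Y.le)
        have hnoC' : ∀ j, 1 ≤ j → j ≤ l → t j ∉ Set.Ioo (g x) (max (g s) (g s')) := by
          intro j a1 a2 hc
          rcases lt_or_ge (t j) (g s) with h' | h'
          · exact hitC s x hsx hs hx hem1 j a1 a2
              (by rw [min_eq_right hgsY.le, max_eq_left hgsY.le]; exact ⟨hc.1, h'⟩)
          · have hgs'gt : t j < g s' := by
              by_contra hcc
              push_neg at hcc
              exact absurd hc.2 (not_lt.2 (max_le h' hcc))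
            exact hitC x s' hxs' hx hs' hem2 j a1 a2
              (by rw [min_eq_left hgs'Y.le, max_eq_right hgs'Y.le]; exact ⟨hc.1, hgs'gt⟩)
        obtain ⟨j, hjl, hj1, hj2⟩ := lap_contains hf (hgmap hx).1
          (hgsY.le.trans (le_max_left _ _)) (max_le (hgmap hs).2 (hgmap hs').2) hnoC'
        have hmaps : Set.MapsTo g (Set.Icc s s') (Set.Icc (t j) (t (j + 1))) := by
          intro y hy
          refine ⟨hj1.trans ?_, le_trans ?_ hj2⟩
          · rcases eq_or_ne y x with rfl | hne
            · exact le_refl _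
            · exact (hmin y hy hne).le
          · rcases le_total y x with hc | hc
            · exact (hL.antitoneOn (Set.left_mem_Icc.2 hsx.le) ⟨hy.1, hc⟩ hy.1).trans
                (le_max_left _ _)
            · exact (hR.monotoneOn ⟨hc, hy.2⟩ (Set.right_mem_Icc.2 hxs'.le) hy.2).trans
                (le_max_right _ _)
        rcases hf.2.2.2.2.2.1 j hjl with hfm | hfm
        · right; intro y hy hne
          exact hfm (hmaps hxmem) (hmaps hy) (hmin y hy hne)
        · left; intro y hy hne
          exact hfm (hmaps hxmem) (hmaps hy) (hmin y hy hne)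
    · -- case: x is a new mark, g x = t j₀ and g is strictly monotone across x
      have hxC : ∃ j, 1 ≤ j ∧ j ≤ l ∧ g x = t j := by
        rcases hxW with h | h
        · exact absurd h hxM
        · exact h.2
      obtain ⟨j₀, hj₀1, hj₀l, hgx⟩ := hxC
      have hemM : ∀ i, 0 < i → i < N → u i ∉ Set.Ioo s s' := by
        intro i h1 h2 hmem'
        rcases lt_trichotomy (u i) x with hc | hc | hc
        · exact hnoM hem1 i h1 h2 ⟨hmem'.1, hc⟩
        · exact hxM ⟨i, h1, h2, hc⟩
        · exact hnoM hem2 i h1 h2 ⟨hc, hmem'.2⟩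
      have hfl := lapflip hf (show j₀ - 1 < l by omega)
      rw [show j₀ - 1 + 1 = j₀ by omega, show j₀ - 1 + 2 = j₀ + 1 by omega] at hfl
      rcases gapmono s s' (hsx.trans hxs') hs hs' hemM with hmono | hanti
      · have h1 : g s < g x := hmono hsmem hxmem hsx
        have h2 : g x < g s' := hmono hxmem hs'mem hxs'
        have hnoCL : ∀ j, 1 ≤ j → j ≤ l → t j ∉ Set.Ioo (g s) (g x) := fun j a1 a2 hc =>
          hitC s x hsx hs hx hem1 j a1 a2
            (by rw [min_eq_left h1.le, max_eq_right h1.le]; exact hc)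
        have hnoCR : ∀ j, 1 ≤ j → j ≤ l → t j ∉ Set.Ioo (g x) (g s') := fun j a1 a2 hc =>
          hitC x s' hxs' hx hs' hem2 j a1 a2
            (by rw [min_eq_left h2.le, max_eq_right h2.le]; exact hc)
        obtain ⟨jL, hjL, hL1, hL2⟩ := lap_contains hf (hgmap hs).1 h1.le (hgmap hx).2 hnoCL
        obtain ⟨jR, hjR, hR1, hR2⟩ := lap_contains hf (hgmap hx).1 h2.le (hgmap hs').2 hnoCR
        have hjLeq : jL = j₀ - 1 := by
          have hA : jL < j₀ := by
            have hv : t jL < t j₀ := lt_of_le_of_lt hL1 (hgx ▸ h1)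
            by_contra hc
            push_neg at hc
            exact absurd hv (not_lt.2 (seq_le (tinc hf) hc (by omega)))
          have hB : j₀ ≤ jL + 1 := tidx_le hf (hgx ▸ hL2) (by omega)
          omega
        have hjReq : jR = j₀ := by
          have hA : jR ≤ j₀ := tidx_le hf (hgx ▸ hR1) (by omega)
          have hB : j₀ ≤ jR := by
            have hv : t j₀ < t (jR + 1) := lt_of_lt_of_le (hgx ▸ h2) hR2
            by_contra hc
            push_neg at hc
            exact absurd hv (not_lt.2 (seq_le (tinc hf) (by omega) (by omega)))
          omega
        have hmapsL : Set.MapsTo g (Set.Icc s x) (Set.Icc (t (j₀ - 1)) (t j₀)) := by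
          intro y hy
          have hy' : y ∈ Set.Icc s s' := ⟨hy.1, hy.2.trans hxs'.le⟩
          refine ⟨?_, ?_⟩
          · rw [← hjLeq]
            exact hL1.trans (hmono.monotoneOn hsmem hy' hy.1)
          · rw [show t j₀ = t (jL + 1) by rw [hjLeq, show j₀ - 1 + 1 = j₀ by omega]]
            exact (hmono.monotoneOn hy' hxmem hy.2).trans hL2
        have hmapsR : Set.MapsTo g (Set.Icc x s') (Set.Icc (t j₀) (t (j₀ + 1))) := by
          intro y hy
          have hy' : y ∈ Set.Icc s s' := ⟨hsx.le.trans hy.1, hy.2⟩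
          refine ⟨?_, ?_⟩
          · rw [← hjReq]
            exact hR1.trans (hmono.monotoneOn hxmem hy' hy.1)
          · rw [show t (j₀ + 1) = t (jR + 1) by rw [hjReq]]
            exact (hmono.monotoneOn hy' hs'mem hy.2).trans hR2
        rcases hfl with ⟨hfL, hfR⟩ | ⟨hfL, hfR⟩
        · left; intro y hy hne
          rcases le_or_gt y x with hc | hc
          · exact hfL (hmapsL ⟨hy.1, hc⟩) (hmapsL (Set.right_mem_Icc.2 hsx.le))
              (hmono ⟨hy.1, hc.trans hxs'.le⟩ hxmem (lt_of_le_of_ne hc hne))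
          · exact hfR (hmapsR (Set.left_mem_Icc.2 hxs'.le)) (hmapsR ⟨hc.le, hy.2⟩)
              (hmono hxmem ⟨hsx.le.trans hc.le, hy.2⟩ hc)
        · right; intro y hy hne
          rcases le_or_gt y x with hc | hc
          · exact hfL (hmapsL ⟨hy.1, hc⟩) (hmapsL (Set.right_mem_Icc.2 hsx.le))
              (hmono ⟨hy.1, hc.trans hxs'.le⟩ hxmem (lt_of_le_of_ne hc hne))
          · exact hfR (hmapsR (Set.left_mem_Icc.2 hxs'.le)) (hmapsR ⟨hc.le, hy.2⟩)
              (hmono hxmem ⟨hsx.le.trans hc.le, hy.2⟩ hc)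
      · have h1 : g x < g s := hanti hsmem hxmem hsx
        have h2 : g s' < g x := hanti hxmem hs'mem hxs'
        have hnoCL : ∀ j, 1 ≤ j → j ≤ l → t j ∉ Set.Ioo (g x) (g s) := fun j a1 a2 hc =>
          hitC s x hsx hs hx hem1 j a1 a2
            (by rw [min_eq_right h1.le, max_eq_left h1.le]; exact hc)
        have hnoCR : ∀ j, 1 ≤ j → j ≤ l → t j ∉ Set.Ioo (g s') (g x) := fun j a1 a2 hc =>
          hitC x s' hxs' hx hs' hem2 j a1 a2
            (by rw [min_eq_right h2.le, max_eq_left h2.le]; exact hc)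
        obtain ⟨jL, hjL, hL1, hL2⟩ := lap_contains hf (hgmap hx).1 h1.le (hgmap hs).2 hnoCL
        obtain ⟨jR, hjR, hR1, hR2⟩ := lap_contains hf (hgmap hs').1 h2.le (hgmap hx).2 hnoCR
        have hjLeq : jL = j₀ := by
          have hA : jL ≤ j₀ := tidx_le hf (hgx ▸ hL1) (by omega)
          have hB : j₀ ≤ jL := by
            have hv : t j₀ < t (jL + 1) := lt_of_lt_of_le (hgx ▸ h1) hL2
            by_contra hc
            push_neg at hc
            exact absurd hv (not_lt.2 (seq_le (tinc hf) (by omega) (by omega)))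
          omega
        have hjReq : jR = j₀ - 1 := by
          have hA : jR < j₀ := by
            have hv : t jR < t j₀ := lt_of_le_of_lt hR1 (hgx ▸ h2)
            by_contra hc
            push_neg at hc
            exact absurd hv (not_lt.2 (seq_le (tinc hf) hc (by omega)))
          have hB : j₀ ≤ jR + 1 := tidx_le hf (hgx ▸ hR2) (by omega)
          omega
        have hmapsL : Set.MapsTo g (Set.Icc s x) (Set.Icc (t j₀) (t (j₀ + 1))) := by
          intro y hy
          have hy' : y ∈ Set.Icc s s' := ⟨hy.1, hy.2.trans hxs'.le⟩
          refine ⟨?_, ?_⟩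
          · rw [← hjLeq]
            exact hL1.trans (hanti.antitoneOn hy' hxmem hy.2)
          · rw [show t (j₀ + 1) = t (jL + 1) by rw [hjLeq]]
            exact (hanti.antitoneOn hsmem hy' hy.1).trans hL2
        have hmapsR : Set.MapsTo g (Set.Icc x s') (Set.Icc (t (j₀ - 1)) (t j₀)) := by
          intro y hy
          have hy' : y ∈ Set.Icc s s' := ⟨hsx.le.trans hy.1, hy.2⟩
          refine ⟨?_, ?_⟩
          · rw [← hjReq]
            exact hR1.trans (hanti.antitoneOn hy' hs'mem hy.2)
          · rw [show t j₀ = t (jR + 1) by rw [hjReq, show j₀ - 1 + 1 = j₀ by omega]]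
            exact (hanti.antitoneOn hxmem hy' hy.1).trans hR2
        rcases hfl with ⟨hfL, hfR⟩ | ⟨hfL, hfR⟩
        · left; intro y hy hne
          rcases le_or_gt y x with hc | hc
          · exact hfR (hmapsL (Set.right_mem_Icc.2 hsx.le)) (hmapsL ⟨hy.1, hc⟩)
              (hanti ⟨hy.1, hc.trans hxs'.le⟩ hxmem (lt_of_le_of_ne hc hne))
          · exact hfL (hmapsR ⟨hc.le, hy.2⟩) (hmapsR (Set.left_mem_Icc.2 hxs'.le))
              (hanti hxmem ⟨hsx.le.trans hc.le, hy.2⟩ hc)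
        · right; intro y hy hne
          rcases le_or_gt y x with hc | hc
          · exact hfR (hmapsL (Set.right_mem_Icc.2 hsx.le)) (hmapsL ⟨hy.1, hc⟩)
              (hanti ⟨hy.1, hc.trans hxs'.le⟩ hxmem (lt_of_le_of_ne hc hne))
          · exact hfL (hmapsR ⟨hc.le, hy.2⟩) (hmapsR (Set.left_mem_Icc.2 hxs'.le))
              (hanti hxmem ⟨hsx.le.trans hc.le, hy.2⟩ hc)
  -- finiteness of W
  have hjset_fin : {j : ℕ | 1 ≤ j ∧ j ≤ l}.Finite :=
    (Set.finite_Icc 1 l).subset (fun x hx => Set.mem_Icc.2 hx)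
  have hCset_fin : (t '' {j : ℕ | 1 ≤ j ∧ j ≤ l}).Finite := hjset_fin.image t
  have hWfin : W.Finite := by
    have hMfin : M.Finite := by
      refine Set.Finite.subset ((Set.finite_Icc 0 N).image u) ?_
      rintro x ⟨i, h1, h2, rfl⟩
      exact ⟨i, Set.mem_Icc.2 ⟨by omega, by omega⟩, rfl⟩
    have hgap_fin : ∀ i < N,
        (Set.Icc (u i) (u (i + 1)) ∩ g ⁻¹' (t '' {j : ℕ | 1 ≤ j ∧ j ≤ l})).Finite := by
      intro i hi
      have himg : (g '' (Set.Icc (u i) (u (i + 1)) ∩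
          g ⁻¹' (t '' {j : ℕ | 1 ≤ j ∧ j ≤ l}))).Finite := by
        refine hCset_fin.subset ?_
        rintro y ⟨x, hx, rfl⟩
        exact hx.2
      have hinj : Set.InjOn g (Set.Icc (u i) (u (i + 1)) ∩
          g ⁻¹' (t '' {j : ℕ | 1 ≤ j ∧ j ≤ l})) := by
        cases hd : d i with
        | true => exact (((hdir i hi).1 hd).injOn).mono Set.inter_subset_left
        | false => exact (((hdir i hi).2 hd).injOn).mono Set.inter_subset_left
      exact Set.Finite.of_finite_image himg hinj
    have hCpre_fin : Cpre.Finite := by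
      refine Set.Finite.subset (Set.Finite.biUnion (Set.finite_Iio N)
        (fun i hi => hgap_fin i hi)) ?_
      rintro x ⟨hxab, j, hj1, hjl, hgxj⟩
      rcases eq_or_lt_of_le hxab.2 with heq | hlt
      · refine Set.mem_biUnion (show N - 1 ∈ Set.Iio N from by
          simpa using (by omega : N - 1 < N)) ⟨⟨?_, ?_⟩, ⟨j, ⟨hj1, hjl⟩, hgxj.symm⟩⟩
        · rw [heq, ← huN]
          exact seq_le hinc (by omega) (by omega)
        · rw [heq, ← huN]
          exact seq_le hinc (by omega) (by omega)
      · obtain ⟨i, hi, hh1, hh2⟩ := findGap u N (x := x) hN (by rw [hu0]; exact hxab.1)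
          (by rw [huN]; exact hlt)
        exact Set.mem_biUnion (show i ∈ Set.Iio N by simpa using hi)
          ⟨⟨hh1, hh2.le⟩, j, ⟨hj1, hjl⟩, hgxj.symm⟩
    exact hMfin.union hCpre_fin
  -- the enumeration of W ∪ {a, b}
  set F : Finset ℝ := hWfin.toFinset ∪ {a, b} with hFdef
  have haF : a ∈ F := by simp [hFdef]
  have hbF : b ∈ F := by simp [hFdef]
  have hFiff : ∀ x, x ∈ F ↔ (x ∈ W ∨ x = a ∨ x = b) := by
    intro x
    rw [hFdef]
    simp [Set.Finite.mem_toFinset]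
    tauto
  have hWF : ∀ x ∈ W, x ∈ F := fun x hx => (hFiff x).2 (Or.inl hx)
  have hFsub : ∀ x ∈ F, x ∈ Set.Icc a b := by
    intro x hx
    rcases (hFiff x).1 hx with hx | hx | hx
    · exact hW_sub hx
    · rw [hx]; exact Set.left_mem_Icc.2 hab.le
    · rw [hx]; exact Set.right_mem_Icc.2 hab.le
  have hFW : ∀ x ∈ F, x ≠ a → x ≠ b → x ∈ W := by
    intro x hx hxa hxb
    rcases (hFiff x).1 hx with hx | hx | hx
    · exact hx
    · exact absurd hx hxa
    · exact absurd hx hxb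
  have hK2 : 2 ≤ F.card := by
    rw [show (2 : ℕ) = 1 + 1 from rfl]
    refine Nat.succ_le_of_lt ?_
    exact Finset.one_lt_card.2 ⟨a, haF, b, hbF, hab.ne⟩
  set N' : ℕ := F.card - 1 with hN'def
  have hN'pos : 0 < N' := by omega
  have hKcard : F.card = N' + 1 := by omega
  set e := F.orderIsoOfFin hKcard with hedef
  set u' : ℕ → ℝ := fun i => if h : i < N' + 1 then (e ⟨i, h⟩ : ℝ) else b with hu'def
  have hu'eval : ∀ (i : ℕ) (h : i < N' + 1), u' i = (e ⟨i, h⟩ : ℝ) := by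
    intro i h
    rw [hu'def]
    exact dif_pos h
  have hu'lt : ∀ {i j : ℕ}, i < j → j ≤ N' → u' i < u' j := by
    intro i j hij hj
    rw [hu'eval i (by omega), hu'eval j (by omega)]
    exact Subtype.coe_lt_coe.2 (e.strictMono (Fin.mk_lt_mk.2 hij))
  have hu'le : ∀ {i j : ℕ}, i ≤ j → j ≤ N' → u' i ≤ u' j := by
    intro i j hij hj
    rcases eq_or_lt_of_le hij with rfl | h
    · exact le_refl _
    · exact (hu'lt h hj).le
  have hu'mem : ∀ i ≤ N', u' i ∈ F := by
    intro i hi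
    rw [hu'eval i (by omega)]
    exact (e ⟨i, by omega⟩).2
  have hu'surj : ∀ x ∈ F, ∃ i ≤ N', u' i = x := by
    intro x hx
    refine ⟨(e.symm ⟨x, hx⟩).1, by omega, ?_⟩
    rw [hu'eval _ (e.symm ⟨x, hx⟩).2]
    have : (⟨(e.symm ⟨x, hx⟩).1, (e.symm ⟨x, hx⟩).2⟩ : Fin (N' + 1)) = e.symm ⟨x, hx⟩ := by
      apply Fin.ext; rfl
    rw [this, OrderIso.apply_symm_apply]
  have hu'0 : u' 0 = a := by
    obtain ⟨i₀, hi₀, hE⟩ := hu'surj a haF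
    refine le_antisymm ?_ (hFsub _ (hu'mem 0 (by omega))).1
    rw [← hE]
    exact hu'le (by omega) hi₀
  have hu'N' : u' N' = b := by
    obtain ⟨i₀, hi₀, hE⟩ := hu'surj b hbF
    refine le_antisymm (hFsub _ (hu'mem N' (le_refl _))).2 ?_
    rw [← hE]
    exact hu'le hi₀ (le_refl _)
  have hmarkmem : ∀ i, 0 < i → i < N' → u' i ∈ W := by
    intro i h0 hiN'
    refine hFW _ (hu'mem i hiN'.le) ?_ ?_
    · rw [← hu'0]
      exact (hu'lt h0 hiN'.le).ne'
    · rw [← hu'N']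
      exact (hu'lt hiN' (le_refl _)).ne
  have hgapW : ∀ i < N', Set.Ioo (u' i) (u' (i + 1)) ∩ W = ∅ := by
    intro i hi
    refine Set.eq_empty_iff_forall_notMem.2 ?_
    rintro y ⟨hy1, hy2⟩
    obtain ⟨jy, hjy, hE⟩ := hu'surj y (hWF y hy2)
    rw [← hE] at hy1
    have hlt1 : i < jy := by
      by_contra hc
      push_neg at hc
      exact absurd hy1.1 (not_lt.2 (hu'le hc (by omega)))
    have hlt2 : jy < i + 1 := by
      by_contra hc
      push_neg at hc
      exact absurd hy1.2 (not_lt.2 (hu'le hc hjy))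
    omega
  have hmemIcc : ∀ i ≤ N', u' i ∈ Set.Icc a b := fun i hi => hFsub _ (hu'mem i hi)
  -- assemble
  refine ⟨N', u', fun i =>
    if StrictMonoOn (f ∘ g) (Set.Icc (u' i) (u' (i + 1))) then true else false,
    ⟨hu'0, hu'N', fun i hi => hu'lt (by omega) hi, ?_, ?_⟩, hN'pos, ?_⟩
  · -- directions
    intro i hi
    constructor
    · intro h
      by_cases hs : StrictMonoOn (f ∘ g) (Set.Icc (u' i) (u' (i + 1)))
      · exact hs
      · simp [if_neg hs] at h
    · intro h
      by_cases hs : StrictMonoOn (f ∘ g) (Set.Icc (u' i) (u' (i + 1)))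
      · simp [if_pos hs] at h
      · exact (gapcomp (u' i) (u' (i + 1)) (hu'lt (by omega) hi) (hmemIcc i (by omega))
          (hmemIcc (i + 1) hi) (hgapW i hi)).resolve_left hs
  · -- alternation
    intro i hi
    have hlt01 : u' i < u' (i + 1) := hu'lt (by omega) (by omega)
    have hlt12 : u' (i + 1) < u' (i + 2) := hu'lt (by omega) (by omega)
    have hgap1 := gapcomp (u' i) (u' (i + 1)) hlt01 (hmemIcc i (by omega))
      (hmemIcc (i + 1) (by omega)) (hgapW i (by omega))
    have hgap2 := gapcomp (u' (i + 1)) (u' (i + 2)) hlt12 (hmemIcc (i + 1) (by omega))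
      (hmemIcc (i + 2) (by omega)) (hgapW (i + 1) (by omega))
    have hext := extremum (u' i) (u' (i + 1)) (u' (i + 2)) hlt01 hlt12
      (hmemIcc i (by omega)) (hmemIcc (i + 2) (by omega))
      (hmarkmem (i + 1) (by omega) (by omega)) (hgapW i (by omega)) (hgapW (i + 1) (by omega))
    have hm0 : u' i ∈ Set.Icc (u' i) (u' (i + 2)) := Set.left_mem_Icc.2 (hlt01.trans hlt12).le
    have hm2 : u' (i + 2) ∈ Set.Icc (u' i) (u' (i + 2)) :=
      Set.right_mem_Icc.2 (hlt01.trans hlt12).le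
    by_cases hsL : StrictMonoOn (f ∘ g) (Set.Icc (u' i) (u' (i + 1)))
    · have h1 : (f ∘ g) (u' i) < (f ∘ g) (u' (i + 1)) :=
        hsL (Set.left_mem_Icc.2 hlt01.le) (Set.right_mem_Icc.2 hlt01.le) hlt01
      rcases hext with hmax | hmin
      · have h2 := hmax (u' (i + 2)) hm2 hlt12.ne'
        have hnot : ¬ StrictMonoOn (f ∘ g) (Set.Icc (u' (i + 1)) (u' (i + 2))) := fun hs =>
          absurd (hs (Set.left_mem_Icc.2 hlt12.le) (Set.right_mem_Icc.2 hlt12.le) hlt12)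
            (not_lt.2 h2.le)
        simp only [if_pos hsL, if_neg hnot, Bool.not_true]
      · exact absurd (hmin (u' i) hm0 hlt01.ne) (not_lt.2 h1.le)
    · have hsaoL := hgap1.resolve_left hsL
      have h1 : (f ∘ g) (u' (i + 1)) < (f ∘ g) (u' i) :=
        hsaoL (Set.left_mem_Icc.2 hlt01.le) (Set.right_mem_Icc.2 hlt01.le) hlt01
      rcases hext with hmax | hmin
      · exact absurd (hmax (u' i) hm0 hlt01.ne) (not_lt.2 h1.le)
      · have h2 := hmin (u' (i + 2)) hm2 hlt12.ne'
        have hyes : StrictMonoOn (f ∘ g) (Set.Icc (u' (i + 1)) (u' (i + 2))) := by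
          rcases hgap2 with h | h
          · exact h
          · exact absurd (h (Set.left_mem_Icc.2 hlt12.le) (Set.right_mem_Icc.2 hlt12.le) hlt12)
              (not_lt.2 h2.le)
        simp only [if_pos hyes, if_neg hsL, Bool.not_false]
  · -- marks characterization
    intro x
    constructor
    · rintro ⟨i, h0, hiN', rfl⟩
      rcases hmarkmem i h0 hiN' with h | h
      · exact Or.inl h
      · exact Or.inr h
    · intro hx
      have hxW : x ∈ W := by
        rcases hx with h | h
        · exact Or.inl h
        · exact Or.inr h
      obtain ⟨i, hiN', hE⟩ := hu'surj x (hWF x hxW)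
      refine ⟨i, ?_, ?_, hE⟩
      · rcases Nat.eq_zero_or_pos i with rfl | h
        · rw [hu'0] at hE
          exact absurd (hE ▸ hxW) haW
        · exact h
      · rcases eq_or_lt_of_le hiN' with rfl | h
        · rw [hu'N'] at hE
          exact absurd (hE ▸ hxW) hbW
        · exact h

section Assembly
attribute [local instance] Classical.propDecidable
variable {f : ℝ → ℝ} {l : ℕ} {t : ℕ → ℝ}

lemma iter_cont_maps (hf : IsLModal f l t) : ∀ n : ℕ,
    ContinuousOn (f^[n]) (Set.Icc (t 0) (t (l + 1))) ∧
    Set.MapsTo (f^[n]) (Set.Icc (t 0) (t (l + 1))) (Set.Icc (t 0) (t (l + 1))) := by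
  intro n
  induction n with
  | zero => exact ⟨by simp [continuousOn_id], by simp [Set.mapsTo_id]⟩
  | succ m ih =>
    rw [Function.iterate_succ']
    exact ⟨hf.1.comp ih.1 ih.2, hf.2.1.comp ih.2⟩

lemma iter_bdry (hf : IsLModal f l t) : ∀ n : ℕ,
    (f^[n] (t 0) = t 0 ∨ f^[n] (t 0) = t (l + 1)) ∧
    (f^[n] (t (l + 1)) = t 0 ∨ f^[n] (t (l + 1)) = t (l + 1)) := by
  intro n
  induction n with
  | zero => simp
  | succ m ih =>
    rw [Function.iterate_succ_apply', Function.iterate_succ_apply']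
    constructor
    · rcases ih.1 with h | h <;> rw [h]
      · exact hf.2.2.2.1
      · exact hf.2.2.2.2.1
    · rcases ih.2 with h | h <;> rw [h]
      · exact hf.2.2.2.1
      · exact hf.2.2.2.2.1

lemma baseMarked (hf : IsLModal f l t) (hl : 0 < l) :
    Marked f (t 0) (t (l + 1)) (l + 1) t
      (fun i => if StrictMonoOn f (Set.Icc (t i) (t (i + 1))) then true else false) := by
  classical
  refine ⟨rfl, rfl, tinc hf, ?_, ?_⟩
  · intro i hi
    constructor
    · intro h
      by_cases hs : StrictMonoOn f (Set.Icc (t i) (t (i + 1)))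
      · exact hs
      · simp [if_neg hs] at h
    · intro h
      by_cases hs : StrictMonoOn f (Set.Icc (t i) (t (i + 1)))
      · simp [if_pos hs] at h
      · exact (hf.2.2.2.2.2.1 i (by omega)).resolve_left hs
  · intro i hi
    have h1 : t i < t (i + 1) := tinc hf i (by omega)
    have h2 : t (i + 1) < t (i + 2) := tinc hf (i + 1) (by omega)
    rcases lapflip hf (show i < l by omega) with ⟨hA, hB⟩ | ⟨hA, hB⟩
    · have hnot : ¬ StrictMonoOn f (Set.Icc (t (i + 1)) (t (i + 2))) := fun hs =>
        absurd (hs (Set.left_mem_Icc.2 h2.le) (Set.right_mem_Icc.2 h2.le) h2)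
          (not_lt.2 (hB (Set.left_mem_Icc.2 h2.le) (Set.right_mem_Icc.2 h2.le) h2).le)
      simp [if_pos hA, if_neg hnot]
    · have hnot : ¬ StrictMonoOn f (Set.Icc (t i) (t (i + 1))) := fun hs =>
        absurd (hs (Set.left_mem_Icc.2 h1.le) (Set.right_mem_Icc.2 h1.le) h1)
          (not_lt.2 (hA (Set.left_mem_Icc.2 h1.le) (Set.right_mem_Icc.2 h1.le) h1).le)
      simp [if_pos hB, if_neg hnot]

lemma invariant (hf : IsLModal f l t) (hl : 0 < l) : ∀ n : ℕ, 1 ≤ n →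
    ∃ N u d, Marked (f^[n]) (t 0) (t (l + 1)) N u d ∧ 0 < N ∧
      (∀ i < N, u i < u (i + 1)) ∧
      ∀ x : ℝ, (∃ i, 0 < i ∧ i < N ∧ u i = x) ↔
        (x ∈ Set.Icc (t 0) (t (l + 1)) ∧ ∃ k < n, ∃ j, 1 ≤ j ∧ j ≤ l ∧ f^[k] x = t j) := by
  intro n
  induction n with
  | zero => omega
  | succ m ih =>
    intro _
    rcases Nat.eq_zero_or_pos m with rfl | hm
    · -- base case n = 1
      refine ⟨l + 1, t, _, by rw [Function.iterate_one]; exact baseMarked hf hl, by omega,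
        tinc hf, ?_⟩
      intro x
      constructor
      · rintro ⟨i, h0, hiN, rfl⟩
        refine ⟨⟨(tlt hf (by omega) (by omega)).le.trans (le_refl _),
          (tlt hf (by omega) (le_refl _)).le⟩, 0, by omega, i, by omega, by omega, by simp⟩
      · rintro ⟨hmem, k, hk, j, hj1, hjl, hE⟩
        have hk0 : k = 0 := by omega
        subst hk0
        simp only [Function.iterate_zero, id_eq] at hE
        exact ⟨j, by omega, by omega, hE.symm⟩
    · obtain ⟨N, u, d, hm', hN, hinc, hmarks⟩ := ih hm
      obtain ⟨hcont, hmapsTo⟩ := iter_cont_maps hf m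
      have hbd := iter_bdry hf m
      have hga : ∀ j, 1 ≤ j → j ≤ l → f^[m] (t 0) ≠ t j := by
        intro j hj1 hjl hE
        rcases hbd.1 with h | h <;> rw [hE] at h
        · exact absurd h.symm (ne_of_lt (tlt hf (by omega) (by omega)))
        · exact absurd h (ne_of_lt (tlt hf (by omega) (by omega)))
      have hgb : ∀ j, 1 ≤ j → j ≤ l → f^[m] (t (l + 1)) ≠ t j := by
        intro j hj1 hjl hE
        rcases hbd.2 with h | h <;> rw [hE] at h
        · exact absurd h.symm (ne_of_lt (tlt hf (by omega) (by omega)))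
        · exact absurd h (ne_of_lt (tlt hf (by omega) (by omega)))
      obtain ⟨N', u', d', hm'', hN', hmarks'⟩ :=
        stepLemma f l t hf hl (f^[m]) N u d hcont hmapsTo hga hgb hm'
      rw [← Function.iterate_succ'] at hm''
      refine ⟨N', u', d', hm'', hN', fun i hi => ?_, ?_⟩
      · -- increasing from Marked
        exact hm''.2.2.1 i hi
      · intro x
        rw [hmarks' x]
        constructor
        · rintro (h | ⟨hmem, j, hj1, hjl, hE⟩)
          · obtain ⟨hmem, k, hk, rest⟩ := (hmarks x).1 h
            exact ⟨hmem, k, by omega, rest⟩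
          · exact ⟨hmem, m, by omega, j, hj1, hjl, hE⟩
        · rintro ⟨hmem, k, hk, j, hj1, hjl, hE⟩
          rcases Nat.lt_or_ge k m with h | h
          · exact Or.inl ((hmarks x).2 ⟨hmem, k, h, j, hj1, hjl, hE⟩)
          · have : k = m := by omega
            subst this
            exact Or.inr ⟨hmem, j, hj1, hjl, hE⟩

end Assembly

lemma ncard_biUnion' {s : Finset ℕ} {S : ℕ → Set ℝ} (hfin : ∀ i ∈ s, (S i).Finite)
    (hdisj : ∀ i ∈ s, ∀ j ∈ s, i ≠ j → Disjoint (S i) (S j)) :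
    (⋃ i ∈ s, S i).ncard = ∑ i ∈ s, (S i).ncard := by
  classical
  induction s using Finset.induction_on with
  | empty => simp
  | @insert a s ha ih =>
    have hd : Disjoint (S a) (⋃ i ∈ s, S i) := by
      simp only [Set.disjoint_iUnion_right]
      intro i hi
      exact hdisj a (Finset.mem_insert_self a s) i (Finset.mem_insert_of_mem hi)
        (fun h => ha (h ▸ hi))
    rw [Finset.set_biUnion_insert, Finset.sum_insert ha,
      Set.ncard_union_eq hd (hfin a (Finset.mem_insert_self a s))
        (Set.Finite.biUnion s.finite_toSet (fun i hi => hfin i (Finset.mem_insert_of_mem hi))),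
      ih (fun i hi => hfin i (Finset.mem_insert_of_mem hi))
        (fun i hi j hj hij =>
          hdisj i (Finset.mem_insert_of_mem hi) j (Finset.mem_insert_of_mem hj) hij)]

noncomputable def newCrossings (f : ℝ → ℝ) (l : ℕ) (t : ℕ → ℝ) (k : ℕ) : ℕ :=
  ∑ i ∈ Finset.Icc 1 l, Set.ncard {x ∈ Set.Icc (t 0) (t (l + 1)) |
    f^[k] x = t i ∧ ∀ m < k, ∀ j ∈ Finset.Icc 1 l, f^[m] x ≠ t j}

/-- The lap number formula `ℓ(f^n) = 1 + ∑_{k=0}^{n-1} s^(k)`, with `s^(0) = l`. -/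
theorem stmt10 (f : ℝ → ℝ) (l : ℕ) (hl : 0 < l) (t : ℕ → ℝ)
    (hf : IsLModal f l t) :
    newCrossings f l t 0 = l ∧
    ∀ n : ℕ, 1 ≤ n →
      lapNumber (f^[n]) (t 0) (t (l + 1)) =
        1 + ∑ k ∈ Finset.range n, newCrossings f l t k := by
  classical
  set Wn : ℕ → Set ℝ := fun n => {x | x ∈ Set.Icc (t 0) (t (l + 1)) ∧
    ∃ k < n, ∃ j, 1 ≤ j ∧ j ≤ l ∧ f^[k] x = t j} with hWn
  have hW0 : Wn 0 = ∅ := by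
    ext x
    simp [hWn]
  have himg : ∀ n, 1 ≤ n → (Wn n).Finite ∧
      ∃ N, 0 < N ∧ lapNumber (f^[n]) (t 0) (t (l + 1)) = N ∧ (Wn n).ncard = N - 1 := by
    intro n hn
    obtain ⟨N, u, d, hm, hN, hinc, hmarks⟩ := invariant hf hl n hn
    have heq : Wn n = u '' (Set.Ioo 0 N) := by
      ext x
      constructor
      · intro h
        obtain ⟨i, h1, h2, h3⟩ := (hmarks x).2 h
        exact ⟨i, ⟨h1, h2⟩, h3⟩
      · rintro ⟨i, ⟨h1, h2⟩, h3⟩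
        exact (hmarks x).1 ⟨i, h1, h2, h3⟩
    have hinj : Set.InjOn u (Set.Ioo 0 N) := by
      intro i hi j hj hij
      by_contra hne
      rcases Nat.lt_or_ge i j with h | h
      · exact absurd hij (ne_of_lt (seq_lt hinc h (Set.mem_Ioo.1 hj).2.le))
      · exact absurd hij.symm
          (ne_of_lt (seq_lt hinc (by omega) (Set.mem_Ioo.1 hi).2.le))
    have hcard : (Wn n).ncard = N - 1 := by
      rw [heq, Set.ncard_image_of_injOn hinj,
        show Set.Ioo 0 N = ↑(Finset.Ioo 0 N) from (Finset.coe_Ioo 0 N).symm,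
        Set.ncard_coe_finset, Nat.card_Ioo]
      omega
    exact ⟨heq ▸ (Set.finite_Ioo 0 N).image u, N, hN, marked_lapNumber hm hN, hcard⟩
  have hWfin : ∀ n, (Wn n).Finite := by
    intro n
    rcases Nat.eq_zero_or_pos n with rfl | hn
    · rw [hW0]; exact Set.finite_empty
    · exact (himg n hn).1
  have hsum : ∀ n, (Wn n).ncard = ∑ k ∈ Finset.range n, newCrossings f l t k := by
    intro n
    induction n with
    | zero => rw [hW0]; simp
    | succ m ih =>
      set Am : Set ℝ := {x | x ∈ Set.Icc (t 0) (t (l + 1)) ∧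
        (∃ j, 1 ≤ j ∧ j ≤ l ∧ f^[m] x = t j) ∧
        ∀ k < m, ¬∃ j, 1 ≤ j ∧ j ≤ l ∧ f^[k] x = t j} with hAm
      have hsplit : Wn (m + 1) = Wn m ∪ Am := by
        ext x
        constructor
        · rintro ⟨hmem, k, hk, hj⟩
          by_cases hx : x ∈ Wn m
          · exact Or.inl hx
          · right
            refine ⟨hmem, ?_, ?_⟩
            · rcases Nat.lt_or_ge k m with h | h
              · exact absurd ⟨hmem, k, h, hj⟩ hx
              · have : k = m := by omega
                subst this
                exact hj
            · intro k' hk' hcon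
              exact hx ⟨hmem, k', hk', hcon⟩
        · rintro (⟨hmem, k, hk, hj⟩ | ⟨hmem, hj, hno⟩)
          · exact ⟨hmem, k, by omega, hj⟩
          · exact ⟨hmem, m, by omega, hj⟩
      have hdisj : Disjoint (Wn m) Am := by
        rw [Set.disjoint_left]
        rintro x ⟨hmem, k, hk, hj⟩ ⟨-, -, hno⟩
        exact hno k hk hj
      have hAfin : Am.Finite :=
        (hWfin (m + 1)).subset (by rw [hsplit]; exact Set.subset_union_right)
      rw [hsplit, Set.ncard_union_eq hdisj (hWfin m) hAfin, ih, Finset.sum_range_succ]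
      congr 1
      have hAm_eq : Am = ⋃ i ∈ Finset.Icc 1 l, {x ∈ Set.Icc (t 0) (t (l + 1)) |
          f^[m] x = t i ∧ ∀ k < m, ∀ j ∈ Finset.Icc 1 l, f^[k] x ≠ t j} := by
        ext x
        simp only [Set.mem_iUnion]
        constructor
        · rintro ⟨hmem, ⟨j, hj1, hjl, hE⟩, hno⟩
          exact ⟨j, Finset.mem_Icc.2 ⟨hj1, hjl⟩, hmem, hE, fun k hk j' hj' hcon =>
            hno k hk ⟨j', (Finset.mem_Icc.1 hj').1, (Finset.mem_Icc.1 hj').2, hcon⟩⟩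
        · rintro ⟨j, hjm, hmem, hE, hno⟩
          exact ⟨hmem, ⟨j, (Finset.mem_Icc.1 hjm).1, (Finset.mem_Icc.1 hjm).2, hE⟩,
            fun k hk h => by
              obtain ⟨j', h1, h2, hcon⟩ := h
              exact hno k hk j' (Finset.mem_Icc.2 ⟨h1, h2⟩) hcon⟩
      rw [hAm_eq, newCrossings]
      refine ncard_biUnion' ?_ ?_
      · intro i hi
        refine (hWfin (m + 1)).subset ?_
        rintro x ⟨hmem, hE, -⟩
        exact ⟨hmem, m, by omega, i, (Finset.mem_Icc.1 hi).1, (Finset.mem_Icc.1 hi).2, hE⟩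
      · intro i hi j hj hij
        rw [Set.disjoint_left]
        rintro x ⟨-, hE1, -⟩ ⟨-, hE2, -⟩
        have : t i = t j := by rw [← hE1, ← hE2]
        rcases Nat.lt_or_ge i j with h | h
        · exact absurd this (ne_of_lt (tlt hf h (by
            have := (Finset.mem_Icc.1 hj).2; omega)))
        · have h' : j < i := by omega
          exact absurd this.symm (ne_of_lt (tlt hf h' (by
            have := (Finset.mem_Icc.1 hi).2; omega)))
  constructor
  · rw [newCrossings]
    have hone : ∀ i ∈ Finset.Icc 1 l, Set.ncard {x ∈ Set.Icc (t 0) (t (l + 1)) |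
        f^[0] x = t i ∧ ∀ m < 0, ∀ j ∈ Finset.Icc 1 l, f^[m] x ≠ t j} = 1 := by
      intro i hi
      rw [Finset.mem_Icc] at hi
      have hset : {x ∈ Set.Icc (t 0) (t (l + 1)) |
          f^[0] x = t i ∧ ∀ m < 0, ∀ j ∈ Finset.Icc 1 l, f^[m] x ≠ t j} = {t i} := by
        ext x
        simp only [Function.iterate_zero, id_eq, Set.mem_setOf_eq, Set.mem_singleton_iff]
        constructor
        · rintro ⟨-, h, -⟩
          exact h
        · rintro rfl
          exact ⟨⟨(tlt hf (by omega) (by omega)).le, (tlt hf (by omega) (le_refl _)).le⟩,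
            rfl, fun m hm => absurd hm (by omega)⟩
      rw [hset, Set.ncard_singleton]
    rw [Finset.sum_congr rfl hone, Finset.sum_const, smul_eq_mul, mul_one, Nat.card_Icc]
    omega
  · intro n hn
    obtain ⟨-, N, hN, hlap, hcard⟩ := himg n hn
    rw [hlap, ← hsum n, hcard]
    omega
end

section
/- If the nonwandering set of a continuous interval map f consists of finitely many periodic points, then the topological entropy of f is zero. -/
/-!
Every point outside the nonwandering set `P` has a wandering neighbourhood, which an orbit
visits at most once, and finitely many small such neighbourhoods cover the complement of a thin
neighbourhood of `P`. Since `P` is finite and `f`-invariant, an orbit staying near `P` follows a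
true orbit of `P`. So up to `ε` an orbit segment of length `n` is determined by its visiting times
to the wandering sets and by the point of `P` it follows after each visit. These are polynomially
many choices in `n`, so covering numbers grow subexponentially and the entropy vanishes.
-/

open Set Filter Topology Dynamics ExpGrowth
open scoped ENNReal

namespace ExpGrowth

theorem expGrowthSup_nonpos_of_le_mul_pow {u : ℕ → ℝ≥0∞} {C R : ℕ}
    (h : ∀ n, u n ≤ C * (n + 1) ^ R) : expGrowthSup u ≤ 0 := by
  refine EReal.le_of_forall_lt_iff_le.1 fun ε hε => ?_
  have hr : 1 < Real.exp ε := Real.one_lt_exp_iff.2 (by exact_mod_cast hε)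
  have hpoly : ∀ᶠ n : ℕ in atTop, ((n + 1 : ℕ) : ℝ) ^ R ≤ Real.exp ε ^ (n + 1) := by
    have := (tendsto_pow_const_div_const_pow_of_one_lt R hr).comp (tendsto_add_atTop_nat 1)
    filter_upwards [this.eventually (ge_mem_nhds zero_lt_one)] with n hn
    exact (div_le_one (by positivity)).1 hn
  calc expGrowthSup u ≤ expGrowthSup fun n : ℕ => EReal.exp ε ^ n := by
        refine expGrowthSup_le_of_eventually_le (b := C * EReal.exp ε) ?_ ?_
        · simp [ENNReal.mul_eq_top]
        filter_upwards [hpoly] with n hn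
        calc u n ≤ C * (n + 1) ^ R := h n
          _ = C * ENNReal.ofReal (((n + 1 : ℕ) : ℝ) ^ R) := by
            rw [ENNReal.ofReal_pow (by positivity), ENNReal.ofReal_natCast, Nat.cast_succ]
          _ ≤ C * ENNReal.ofReal (Real.exp ε ^ (n + 1)) := by gcongr
          _ = C * EReal.exp ε * EReal.exp ε ^ n := by
            rw [ENNReal.ofReal_pow (Real.exp_pos ε).le, EReal.exp_coe, pow_succ]; ring
    _ = ε := by rw [expGrowthSup_pow, EReal.log_exp]

end ExpGrowth

namespace Dynamics

section Wandering

variable {X : Type*} {f : X → X}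

def nonwanderingSet [TopologicalSpace X] (f : X → X) (K : Set X) : Set X :=
  {p ∈ K | ∀ U ∈ 𝓝[K] p, ∃ n > 0, (f^[n] '' U ∩ U).Nonempty}

def IsWandering (f : X → X) (U : Set X) : Prop :=
  ∀ n > 0, Disjoint (f^[n] '' U) U

theorem IsWandering.mono {U V : Set X} (hU : IsWandering f U) (hVU : V ⊆ U) :
    IsWandering f V :=
  fun n hn => (hU n hn).mono (image_mono hVU) hVU

theorem IsWandering.eq_of_iterate_mem {U : Set X} (hU : IsWandering f U) {x : X} {i j : ℕ}
    (hi : f^[i] x ∈ U) (hj : f^[j] x ∈ U) : i = j := by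
  wlog hij : i < j generalizing i j
  · rcases (not_lt.1 hij).eq_or_lt with h | h
    exacts [h.symm, (this hj hi h).symm]
  have hmem : f^[j] x ∈ f^[j - i] '' U :=
    ⟨f^[i] x, hi, by rw [← Function.iterate_add_apply, Nat.sub_add_cancel hij.le]⟩
  exact absurd hj (disjoint_left.1 (hU _ (Nat.sub_pos_of_lt hij)) hmem)

variable [TopologicalSpace X] {K : Set X}

theorem mapsTo_nonwanderingSet (hc : ContinuousOn f K) (hm : MapsTo f K K) :
    MapsTo f (nonwanderingSet f K) (nonwanderingSet f K) := by
  rintro p ⟨hpK, hp⟩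
  refine ⟨hm hpK, fun U hU => ?_⟩
  obtain ⟨n, hn, _, ⟨z, hz, rfl⟩, hzn⟩ := hp _ ((hc p hpK).tendsto_nhdsWithin hm hU)
  exact ⟨n, hn, f (f^[n] z), ⟨f z, hz, ((Function.Commute.self_iterate f n).eq z).symm⟩,
    hzn⟩

theorem exists_isWandering_mem_nhdsWithin {x : X} (hx : x ∈ K)
    (hx' : x ∉ nonwanderingSet f K) : ∃ U ∈ 𝓝[K] x, IsWandering f U := by
  by_contra! h
  refine hx' ⟨hx, fun U hU => ?_⟩
  simpa [IsWandering, not_disjoint_iff_nonempty_inter] using h U hU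

end Wandering

section Words

variable {α β : Type*} {g : β → β} {u v : ℕ → α ⊕ β} {n : ℕ}

structure IsAdmissibleWord (g : β → β) (u : ℕ → α ⊕ β) : Prop where
  inl_eq : ∀ a i j, u i = .inl a → u j = .inl a → i = j
  inr_succ : ∀ k p q, u k = .inr p → u (k + 1) = .inr q → q = g p

open Classical in
noncomputable def visitTime (n : ℕ) (u : ℕ → α ⊕ β) (a : α) : Option (Fin n) :=
  if h : ∃ i : Fin n, u i = .inl a then some h.choose else none

/-- Records the visiting time of each `inl a` and the `inr`-symbol at time `0` and right after
each visit; between two visits the `inr`-symbols of an admissible word are then forced by `g`. -/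
noncomputable def wordCode (n : ℕ) (u : ℕ → α ⊕ β) :
    (α → Option (Fin n)) × (Option α → Option β) :=
  (visitTime n u, fun o => o.elim (u 0).getRight?
    fun a => (visitTime n u a).bind fun i => (u (i + 1)).getRight?)

theorem IsAdmissibleWord.visitTime_eq_some_iff (hu : IsAdmissibleWord g u) {a : α}
    {i : Fin n} : visitTime n u a = some i ↔ u i = .inl a := by
  unfold visitTime
  split_ifs with h
  · exact ⟨fun hi => Option.some_inj.1 hi ▸ h.choose_spec,
      fun hi => congrArg some (Fin.ext (hu.inl_eq a _ _ h.choose_spec hi))⟩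
  · exact ⟨nofun, fun hi => absurd ⟨i, hi⟩ h⟩

theorem IsAdmissibleWord.eqOn_of_wordCode_eq (hu : IsAdmissibleWord g u)
    (hv : IsAdmissibleWord g v) (h : wordCode n u = wordCode n v) : ∀ k < n, u k = v k := by
  have hvisit : visitTime n u = visitTime n v := congrArg Prod.fst h
  have hresume := congrFun (congrArg Prod.snd h)
  have inl_iff : ∀ k (hk : k < n) a, u k = .inl a ↔ v k = .inl a := fun k hk a => by
    rw [← hu.visitTime_eq_some_iff (i := ⟨k, hk⟩), hvisit, hv.visitTime_eq_some_iff]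
  have eq_of_getRight : ∀ k < n, (u k).getRight? = (v k).getRight? → u k = v k := by
    intro k hk hright
    rcases hu' : u k with a | p
    · exact ((inl_iff k hk a).1 hu').symm
    rcases hv' : v k with a | q
    · exact absurd ((inl_iff k hk a).2 hv') (by simp [hu'])
    simpa [hu', hv'] using hright
  intro k hk
  induction k with
  | zero => exact eq_of_getRight 0 hk (by simpa [wordCode] using hresume none)
  | succ m ih =>
    refine eq_of_getRight _ hk ?_
    rcases hum : u m with a | r
    · have hm : m < n := by omega
      have hvis := (hu.visitTime_eq_some_iff (i := ⟨m, hm⟩)).2 hum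
      simpa [wordCode, hvis, ← hvisit] using hresume (some a)
    have hvm : v m = .inr r := (ih (by omega)).symm.trans hum
    rcases hu1 : u (m + 1) with a | p
    · rw [(inl_iff _ hk a).1 hu1]
    rcases hv1 : v (m + 1) with a | q
    · exact absurd ((inl_iff _ hk a).2 hv1) (by simp [hu1])
    simp [hu.inr_succ m r p hum hu1, hv.inr_succ m r q hvm hv1]

theorem card_wordCode [Fintype α] [DecidableEq α] [Fintype β] (n : ℕ) :
    Fintype.card ((α → Option (Fin n)) × (Option α → Option β)) =
      (Fintype.card β + 1) ^ (Fintype.card α + 1) * (n + 1) ^ Fintype.card α := by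
  simp [mul_comm]

end Words

theorem coverMincard_le_card_of_subset_iUnion {X ι : Type*} [Fintype ι] {T : X → X}
    {F : Set X} {U : SetRel X X} {n : ℕ} (A : ι → Set X) (hF : F ⊆ ⋃ i, A i)
    (hA : ∀ i, ∀ x ∈ A i ∩ F, ∀ y ∈ A i ∩ F, (x, y) ∈ dynEntourage T U n) :
    coverMincard T F U n ≤ Fintype.card ι := by
  classical
  let s : Finset X := Finset.univ.image fun i : {i // (A i ∩ F).Nonempty} => i.2.some
  have hs : IsDynCoverOf T F U n s := by
    intro x hx
    obtain ⟨i, hi⟩ := mem_iUnion.1 (hF hx)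
    have hne : (A i ∩ F).Nonempty := ⟨x, hi, hx⟩
    exact ⟨hne.some, Finset.mem_image.2 ⟨⟨i, hne⟩, Finset.mem_univ _, rfl⟩,
      hA i x ⟨hi, hx⟩ _ hne.some_mem⟩
  calc coverMincard T F U n ≤ s.card := hs.coverMincard_le_card
    _ ≤ Fintype.card {i // (A i ∩ F).Nonempty} := by exact_mod_cast Finset.card_image_le
    _ ≤ Fintype.card ι := by exact_mod_cast Fintype.card_subtype_le _

theorem coverMincard_le_of_regions {X α β : Type*} [Fintype α] [Fintype β] {f : X → X}
    {K : Set X} {U : SetRel X X} (g : β → β) (region : α ⊕ β → Set X) (hm : MapsTo f K K)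
    (hcov : K ⊆ ⋃ c, region c) (hwand : ∀ a, IsWandering f (region (.inl a)))
    (hshadow : ∀ p q, ∀ x ∈ K, x ∈ region (.inr p) → f x ∈ region (.inr q) → q = g p)
    (hsmall : ∀ c, ∀ x ∈ region c ∩ K, ∀ y ∈ region c ∩ K, (x, y) ∈ U) (n : ℕ) :
    coverMincard f K U n ≤
      ((Fintype.card β + 1) ^ (Fintype.card α + 1) * (n + 1) ^ Fintype.card α : ℕ) := by
  classical
  let A (c : (α → Option (Fin n)) × (Option α → Option β)) : Set X :=
    {x | ∃ u, IsAdmissibleWord g u ∧ wordCode n u = c ∧ ∀ k, f^[k] x ∈ region (u k)}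
  have hA : K ⊆ ⋃ c, A c := by
    intro x hx
    choose u hu using fun k => mem_iUnion.1 (hcov (hm.iterate k hx))
    refine mem_iUnion.2 ⟨wordCode n u, u, ⟨fun a i j hi hj => ?_, fun k p q hp hq => ?_⟩,
      rfl, hu⟩
    · exact (hwand a).eq_of_iterate_mem (hi ▸ hu i) (hj ▸ hu j)
    · refine hshadow p q _ (hm.iterate k hx) (hp ▸ hu k) ?_
      rw [← Function.iterate_succ_apply' f k x, ← hq]
      exact hu (k + 1)
  rw [← card_wordCode]
  refine coverMincard_le_card_of_subset_iUnion A hA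
    fun c x ⟨⟨u, hu, hcu, hxu⟩, hx⟩ y ⟨⟨v, hv, hcv, hyv⟩, hy⟩ => mem_dynEntourage.2
      fun k hk => hsmall (u k) _ ⟨hxu k, hm.iterate k hx⟩ _ ⟨?_, hm.iterate k hy⟩
  rw [hu.eqOn_of_wordCode_eq hv (hcu.trans hcv.symm) k hk]
  exact hyv k

section Metric

variable {X : Type*} [MetricSpace X] {f : X → X} {K : Set X}

theorem eventually_forall_dist_lt_imp_eq_apply {P : Set X} (hP : P.Finite)
    (hc : ∀ p ∈ P, ContinuousWithinAt f K p) :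
    ∀ᶠ ρ in 𝓝[>] (0 : ℝ), ∀ p ∈ P, ∀ q ∈ P, ∀ z ∈ K,
      dist z p < ρ → dist (f z) q < ρ → q = f p := by
  simp only [eventually_all_finite hP]
  intro p hp q _
  by_cases hqp : q = f p
  · exact Eventually.of_forall fun _ _ _ _ _ => hqp
  have hd : 0 < dist q (f p) / 2 := half_pos (dist_pos.2 hqp)
  obtain ⟨δ, hδ, hδf⟩ := Metric.continuousWithinAt_iff.1 (hc p hp) _ hd
  filter_upwards [Ioo_mem_nhdsGT (lt_min hδ hd)] with ρ hρ z hz hzp hfzq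
  have hfz := hδf hz (hzp.trans (hρ.2.trans_le (min_le_left _ _)))
  have := dist_triangle_left q (f p) (f z)
  linarith [hρ.2.trans_le (min_le_right _ _)]

theorem exists_isOpen_isWandering_subset_ball {x : X} (hx : x ∈ K)
    (hx' : x ∉ nonwanderingSet f K) {ε : ℝ} (hε : 0 < ε) :
    ∃ O, IsOpen O ∧ x ∈ O ∧ IsWandering f (O ∩ K) ∧ O ∩ K ⊆ Metric.ball x ε := by
  obtain ⟨U, hU, hwand⟩ := exists_isWandering_mem_nhdsWithin hx hx'
  obtain ⟨O, hO, hxO, hOU⟩ := mem_nhdsWithin.1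
    (inter_mem hU (mem_nhdsWithin_of_mem_nhds (Metric.ball_mem_nhds x hε)))
  exact ⟨O, hO, hxO, hwand.mono fun y hy => (hOU hy).1, fun y hy => (hOU hy).2⟩

theorem exists_coverMincard_le_mul_pow (hK : IsCompact K) (hc : ContinuousOn f K)
    (hm : MapsTo f K K) (hfin : (nonwanderingSet f K).Finite) {ε : ℝ} (hε : 0 < ε) :
    ∃ C R : ℕ, ∀ n,
      coverMincard f K {p | dist p.1 p.2 < ε} n ≤ (C * (n + 1) ^ R : ℕ) := by
  classical
  set P := nonwanderingSet f K
  obtain ⟨ρ, hshadow, hρ, hρε⟩ := ((eventually_forall_dist_lt_imp_eq_apply hfin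
    fun p hp => hc p hp.1).and (Ioo_mem_nhdsGT (half_pos hε))).exists
  set V := ⋃ p ∈ P, Metric.ball p ρ
  choose! O hO hxO hwand hball using fun x (hx : x ∈ K \ V) =>
    exists_isOpen_isWandering_subset_ball hx.1
      (fun hxP => hx.2 (mem_biUnion hxP (Metric.mem_ball_self hρ))) (half_pos hε)
  obtain ⟨t, htV, ht, hcovt⟩ := (hK.diff (isOpen_biUnion fun _ _ => Metric.isOpen_ball)
    ).elim_finite_subcover_image hO fun x hx => mem_biUnion hx (hxO x hx)
  have := hfin.fintype
  have := ht.fintype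
  refine ⟨_, _, coverMincard_le_of_regions ((mapsTo_nonwanderingSet hc hm).restrict f P P)
    (Sum.elim (fun i : t => O i ∩ K) fun p : P => Metric.ball (p : X) ρ) hm ?_ ?_ ?_ ?_⟩
  · intro x hx
    by_cases hxV : x ∈ V
    · obtain ⟨p, hp, hxp⟩ := mem_iUnion₂.1 hxV
      exact mem_iUnion.2 ⟨.inr ⟨p, hp⟩, hxp⟩
    · obtain ⟨i, hi, hxi⟩ := mem_iUnion₂.1 (hcovt ⟨hx, hxV⟩)
      exact mem_iUnion.2 ⟨.inl ⟨i, hi⟩, hxi, hx⟩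
  · exact fun i => hwand i (htV i.2)
  · exact fun p q x hx hxp hfxq => Subtype.ext (hshadow p p.2 q q.2 x hx hxp hfxq)
  · rintro (i | p) x ⟨hx, -⟩ y ⟨hy, -⟩ <;> show dist x y < ε
    · have hxi := hball i (htV i.2) hx
      have hyi := hball i (htV i.2) hy
      rw [Metric.mem_ball] at hxi hyi
      linarith [dist_triangle_right x y i]
    · rw [Sum.elim_inr, Metric.mem_ball] at hx hy
      linarith [dist_triangle_right x y p]

theorem coverEntropy_eq_zero_of_finite_nonwanderingSet (hK : IsCompact K) (hKne : K.Nonempty)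
    (hc : ContinuousOn f K) (hm : MapsTo f K K) (hfin : (nonwanderingSet f K).Finite) :
    coverEntropy f K = 0 := by
  refine le_antisymm ?_ (coverEntropy_nonneg f hKne)
  rw [coverEntropy_eq_iSup_basis Metric.uniformity_basis_dist]
  refine iSup₂_le fun ε hε => ?_
  obtain ⟨C, R, hcard⟩ := exists_coverMincard_le_mul_pow hK hc hm hfin hε
  exact expGrowthSup_nonpos_of_le_mul_pow fun n => by
    exact_mod_cast ENat.toENNReal_mono (hcard n)

end Metric

end Dynamics

theorem stmt15_general (a b : ℝ) (hab : a ≤ b) (f : ℝ → ℝ)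
    (hc : ContinuousOn f (Set.Icc a b))
    (hm : Set.MapsTo f (Set.Icc a b) (Set.Icc a b))
    (NW : Set ℝ)
    (hNW : NW = {p ∈ Set.Icc a b |
      ∀ U ∈ nhdsWithin p (Set.Icc a b), ∃ n > 0, (f^[n] '' U ∩ U).Nonempty})
    (hfin : NW.Finite) :
    Dynamics.coverEntropy f (Set.Icc a b) = 0 := by
  subst hNW
  exact coverEntropy_eq_zero_of_finite_nonwanderingSet isCompact_Icc (nonempty_Icc.2 hab) hc hm
    hfin

/-- If the nonwandering set of a continuous interval map consists of finitely many
periodic points, then the topological entropy of the map is zero. -/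
theorem stmt15 (a b : ℝ) (hab : a ≤ b) (f : ℝ → ℝ)
    (hc : ContinuousOn f (Set.Icc a b))
    (hm : Set.MapsTo f (Set.Icc a b) (Set.Icc a b))
    (NW : Set ℝ)
    (hNW : NW = {p ∈ Set.Icc a b |
      ∀ U ∈ nhdsWithin p (Set.Icc a b), ∃ n > 0, (f^[n] '' U ∩ U).Nonempty})
    (hfin : NW.Finite) (hper : ∀ p ∈ NW, ∃ n > 0, f^[n] p = p) :
    Dynamics.coverEntropy f (Set.Icc a b) = 0 :=
  stmt15_general a b hab f hc hm NW hNW hfin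
end
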